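/- arXiv:1606.03745 — 7 statements merged into one kernel-verified Lean document; each statement's English description precedes it below -/
import Mathlib

section
/- Let γ > -1/2 and c > 0. Define h(x) = ∫₀^∞ (x + s²)^γ e^{-c s²} ds for x ≥ 0. Then there exist constants C₁, C₂ > 0 depending only on γ and c such that C₁ (1+x)^γ ≤ h(x) ≤ C₂ (1+x)^γ for all x ≥ 0. -/
/-!
Write `x + s² = (1 + x) t` with `t = (x + s²) / (1 + x)`, a convex combination of `1`
and `s²`. Since `t ↦ t ^ γ` is monotone or antitone, `t ^ γ` lies between `1` and
`s ^ (2γ)`, so `h x / (1 + x) ^ γ` lies between the integrals of `min 1 (s ^ (2γ)) e^{-cs²}`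
and `max 1 (s ^ (2γ)) e^{-cs²}`; these are positive, and finite because `2γ > -1`.
-/

open MeasureTheory Real Set

lemma Real.rpow_mem_uIcc_of_mem_uIcc {a b t : ℝ} (ha : 0 < a) (hb : 0 < b) (ht : t ∈ uIcc a b)
    (γ : ℝ) : t ^ γ ∈ uIcc (a ^ γ) (b ^ γ) := by
  have hmono : MonotoneOn (· ^ γ) (Ioi (0 : ℝ)) ∨ AntitoneOn (· ^ γ) (Ioi (0 : ℝ)) := by
    rcases le_total 0 γ with hγ | hγ
    · exact .inl ((monotoneOn_rpow_Ici_of_exponent_nonneg hγ).mono Ioi_subset_Ici_self)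
    · exact .inr (antitoneOn_rpow_Ioi_of_exponent_nonpos hγ)
  have htpos : 0 < t := lt_of_lt_of_le (lt_min ha hb) ht.1
  exact monotoneOn_or_antitoneOn_iff_uIcc.1 hmono a ha b hb t htpos ht

lemma add_div_one_add_mem_uIcc {x : ℝ} (hx : 0 ≤ x) (y : ℝ) : (x + y) / (1 + x) ∈ uIcc 1 y := by
  have h1x : 0 < 1 + x := by linarith
  rcases le_total 1 y with hy | hy
  · rw [uIcc_of_le hy, mem_Icc, le_div_iff₀ h1x, div_le_iff₀ h1x]
    constructor <;> nlinarith
  · rw [uIcc_of_ge hy, mem_Icc, le_div_iff₀ h1x, div_le_iff₀ h1x]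
    constructor <;> nlinarith

lemma rpow_add_mem_Icc {x y : ℝ} (hx : 0 ≤ x) (hy : 0 < y) (γ : ℝ) :
    (x + y) ^ γ ∈ Icc ((1 + x) ^ γ * min 1 (y ^ γ)) ((1 + x) ^ γ * max 1 (y ^ γ)) := by
  have h1x : 0 < 1 + x := by linarith
  have hmem := rpow_mem_uIcc_of_mem_uIcc one_pos hy (add_div_one_add_mem_uIcc hx y) γ
  rw [one_rpow] at hmem
  have hsplit : (x + y) ^ γ = (1 + x) ^ γ * ((x + y) / (1 + x)) ^ γ := by
    rw [← mul_rpow h1x.le (div_nonneg (by linarith) h1x.le), mul_div_cancel₀ _ h1x.ne']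
  rw [hsplit]
  have hpow : 0 ≤ (1 + x) ^ γ := rpow_nonneg h1x.le γ
  exact ⟨mul_le_mul_of_nonneg_left hmem.1 hpow, mul_le_mul_of_nonneg_left hmem.2 hpow⟩

lemma integrableOn_rpow_sq_mul_exp_neg_mul_sq {c γ : ℝ} (hc : 0 < c) (hγ : -1 / 2 < γ) :
    IntegrableOn (fun s : ℝ ↦ (s ^ 2) ^ γ * exp (-c * s ^ 2)) (Ioi 0) := by
  refine (integrableOn_rpow_mul_exp_neg_mul_sq hc (s := 2 * γ) (by linarith)).congr_fun
    (fun s hs ↦ ?_) measurableSet_Ioi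
  rw [← rpow_natCast, ← rpow_mul (le_of_lt hs)]
  norm_num

lemma integrableOn_max_one_rpow_sq_mul_exp_neg_mul_sq {c γ : ℝ} (hc : 0 < c) (hγ : -1 / 2 < γ) :
    IntegrableOn (fun s : ℝ ↦ max 1 ((s ^ 2) ^ γ) * exp (-c * s ^ 2)) (Ioi 0) := by
  refine Integrable.mono' ((integrable_exp_neg_mul_sq hc).integrableOn.add
    (integrableOn_rpow_sq_mul_exp_neg_mul_sq hc hγ)) (by fun_prop) ?_
  refine ae_of_all _ fun s ↦ ?_
  have hmax : max 1 ((s ^ 2) ^ γ) ≤ 1 + (s ^ 2) ^ γ :=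
    max_le (by linarith [rpow_nonneg (sq_nonneg s) γ]) (by linarith)
  rw [norm_of_nonneg (by positivity), Pi.add_apply, ← one_add_mul]
  exact mul_le_mul_of_nonneg_right hmax (exp_pos _).le

lemma integrableOn_min_one_rpow_sq_mul_exp_neg_mul_sq {c : ℝ} (hc : 0 < c) (γ : ℝ) :
    IntegrableOn (fun s : ℝ ↦ min 1 ((s ^ 2) ^ γ) * exp (-c * s ^ 2)) (Ioi 0) := by
  refine Integrable.mono' (integrable_exp_neg_mul_sq hc).integrableOn (by fun_prop) ?_
  refine ae_of_all _ fun s ↦ ?_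
  rw [norm_of_nonneg (by positivity)]
  exact mul_le_of_le_one_left (exp_pos _).le (min_le_left _ _)

lemma setIntegral_pos_of_forall_pos {X : Type*} [MeasurableSpace X] {μ : Measure X} {s : Set X}
    {f : X → ℝ} (hs : MeasurableSet s) (hμs : μ s ≠ 0) (hf : IntegrableOn f s μ)
    (hpos : ∀ x ∈ s, 0 < f x) : 0 < ∫ x in s, f x ∂μ := by
  refine (setIntegral_pos_iff_support_of_nonneg_ae
    (ae_restrict_of_forall_mem hs fun x hx ↦ (hpos x hx).le) hf).2 ?_
  have hsupp : s ⊆ Function.support f := fun x hx ↦ (hpos x hx).ne'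
  rwa [inter_eq_right.2 hsupp, pos_iff_ne_zero]

theorem stmt0 (γ c : ℝ) (hγ : -1/2 < γ) (hc : 0 < c) :
    ∃ C₁ C₂ : ℝ, 0 < C₁ ∧ 0 < C₂ ∧ ∀ x : ℝ, 0 ≤ x →
      C₁ * (1 + x) ^ γ ≤ ∫ s in Set.Ioi (0:ℝ), (x + s^2) ^ γ * Real.exp (-c * s^2) ∧
      ∫ s in Set.Ioi (0:ℝ), (x + s^2) ^ γ * Real.exp (-c * s^2) ≤ C₂ * (1 + x) ^ γ := by
  have hw := integrableOn_min_one_rpow_sq_mul_exp_neg_mul_sq hc γ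
  have hW := integrableOn_max_one_rpow_sq_mul_exp_neg_mul_sq hc hγ
  have hC₁ : 0 < ∫ s in Ioi (0 : ℝ), min 1 ((s ^ 2) ^ γ) * exp (-c * s ^ 2) :=
    setIntegral_pos_of_forall_pos measurableSet_Ioi (by simp) hw fun s hs ↦
      mul_pos (lt_min one_pos (rpow_pos_of_pos (pow_pos hs 2) γ)) (exp_pos _)
  refine ⟨_, _, hC₁, hC₁.trans_le (setIntegral_mono_on hw hW measurableSet_Ioi fun s _ ↦
    mul_le_mul_of_nonneg_right min_le_max (exp_pos _).le), fun x hx ↦ ?_⟩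
  have hbounds (s : ℝ) (hs : s ∈ Ioi (0 : ℝ)) := rpow_add_mem_Icc hx (pow_pos hs 2) γ
  have hf : IntegrableOn (fun s : ℝ ↦ (x + s ^ 2) ^ γ * exp (-c * s ^ 2)) (Ioi 0) := by
    refine Integrable.mono' (hW.const_mul ((1 + x) ^ γ)) (by fun_prop)
      (ae_restrict_of_forall_mem measurableSet_Ioi fun s hs ↦ ?_)
    rw [norm_of_nonneg (by positivity), ← mul_assoc]
    exact mul_le_mul_of_nonneg_right (hbounds s hs).2 (exp_pos _).le
  rw [mul_comm, mul_comm _ ((1 + x) ^ γ), ← integral_const_mul, ← integral_const_mul]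
  constructor
  · refine setIntegral_mono_on (hw.const_mul _) hf measurableSet_Ioi fun s hs ↦ ?_
    rw [← mul_assoc]
    exact mul_le_mul_of_nonneg_right (hbounds s hs).1 (exp_pos _).le
  · refine setIntegral_mono_on hf (hW.const_mul _) measurableSet_Ioi fun s hs ↦ ?_
    rw [← mul_assoc]
    exact mul_le_mul_of_nonneg_right (hbounds s hs).2 (exp_pos _).le
end

section
/- Let c > 0 and β > 1. Define I_app(a,b) = ∫₀^∞ ((s + √(4ab + s²))/(2a))^{2(β-1)} · e^{-c s²}/√(4ab + s²) ds for a, b > 0. Then there exist constants C₁, C₂ > 0 depending only on β and c such that C₁ (1 + 4ab)^{β - 3/2} / a^{2(β-1)} ≤ I_app(a,b) ≤ C₂ (1 + 4ab)^{β - 3/2} / a^{2(β-1)} for all a, b > 0. -/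
/-!
As `0 ≤ s ≤ √x` for `x = 4ab + s²`, the base `(s + √x) / (2a)` lies between `√x / (2a)` and
`√x / a`, so up to a factor `2 ^ (2(β-1))` the integral is `a ^ (-2(β-1)) J(4ab)`, where
`J(m) = ∫₀^∞ (m + s²) ^ p e^{-cs²} ds` and `p = β - 3/2 > -1/2`. Since `m + s²` lies between
`1 + m` and `(1 + m) s²`, we get `(m + s²) ^ p ≤ (1 + m) ^ p (1 + s ^ (2p))`, an integrable
majorant; for `s ∈ (1, 2]` it lies between `1 + m` and `4 (1 + m)`, which gives the lower bound.
-/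

open MeasureTheory Real Set

namespace Real

lemma rpow_le_max_of_mem_uIcc {x u w p : ℝ} (hu : 0 < u) (hw : 0 < w) (hx : x ∈ uIcc u w) :
    x ^ p ≤ max (u ^ p) (w ^ p) := by
  rcases le_total 0 p with hp | hp <;> rcases mem_uIcc.1 hx with ⟨hux, hxw⟩ | ⟨hwx, hxu⟩
  · exact le_max_of_le_right (rpow_le_rpow (hu.le.trans hux) hxw hp)
  · exact le_max_of_le_left (rpow_le_rpow (hw.le.trans hwx) hxu hp)
  · exact le_max_of_le_left (rpow_le_rpow_of_nonpos hu hux hp)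
  · exact le_max_of_le_right (rpow_le_rpow_of_nonpos hw hwx hp)

lemma min_le_rpow_of_mem_uIcc {x u w p : ℝ} (hu : 0 < u) (hw : 0 < w) (hx : x ∈ uIcc u w) :
    min (u ^ p) (w ^ p) ≤ x ^ p := by
  rcases le_total 0 p with hp | hp <;> rcases mem_uIcc.1 hx with ⟨hux, hxw⟩ | ⟨hwx, hxu⟩
  · exact min_le_of_left_le (rpow_le_rpow hu.le hux hp)
  · exact min_le_of_right_le (rpow_le_rpow hw.le hwx hp)
  · exact min_le_of_right_le (rpow_le_rpow_of_nonpos (hu.trans_le hux) hxw hp)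
  · exact min_le_of_left_le (rpow_le_rpow_of_nonpos (hw.trans_le hwx) hxu hp)

end Real

lemma add_mem_uIcc_one_add {m : ℝ} (t : ℝ) (hm : 0 ≤ m) :
    m + t ∈ uIcc (1 + m) ((1 + m) * t) := by
  rcases le_total t 1 with h | h
  · exact mem_uIcc.2 (Or.inr ⟨by nlinarith, by linarith⟩)
  · exact mem_uIcc.2 (Or.inl ⟨by linarith, by nlinarith⟩)

lemma rpow_add_le_one_add_rpow_mul {m t : ℝ} (p : ℝ) (hm : 0 ≤ m) (ht : 0 < t) :
    (m + t) ^ p ≤ (1 + m) ^ p * (1 + t ^ p) := by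
  have h := rpow_le_max_of_mem_uIcc (p := p) (by linarith) (by positivity)
    (add_mem_uIcc_one_add t hm)
  rw [mul_rpow (by linarith) ht.le] at h
  rw [mul_one_add]
  exact h.trans (max_le_add_of_nonneg (by positivity) (by positivity))

lemma integral_le_integral_and_integral_le_integral {α : Type*} [MeasurableSpace α] {μ : Measure α}
    {L f U : α → ℝ} (hL : 0 ≤ᵐ[μ] L) (hLf : L ≤ᵐ[μ] f) (hfU : f ≤ᵐ[μ] U) (hU : Integrable U μ)
    (hf : AEStronglyMeasurable f μ) :
    ∫ x, L x ∂μ ≤ ∫ x, f x ∂μ ∧ ∫ x, f x ∂μ ≤ ∫ x, U x ∂μ := by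
  have hf0 : 0 ≤ᵐ[μ] f := hL.trans hLf
  have hfi : Integrable f μ := hU.mono' hf <| by
    filter_upwards [hf0, hfU] with x h0 h1
    rwa [norm_of_nonneg h0]
  exact ⟨integral_mono_of_nonneg hL hfi hLf, integral_mono_of_nonneg hf0 hU hfU⟩

section GaussianWeight

variable {c p : ℝ}

lemma rpow_add_sq_mul_exp_le {m s : ℝ} (hm : 0 ≤ m) (hs : 0 < s) :
    (m + s ^ 2) ^ p * exp (-c * s ^ 2) ≤ (1 + m) ^ p * ((1 + s ^ (2 * p)) * exp (-c * s ^ 2)) := by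
  have hsq : (s ^ 2) ^ p = s ^ (2 * p) := by
    rw [← rpow_natCast, ← rpow_mul hs.le, Nat.cast_ofNat]
  rw [← mul_assoc, ← hsq]
  gcongr
  exact rpow_add_le_one_add_rpow_mul p hm (by positivity)

lemma integrableOn_one_add_rpow_mul_exp_neg_mul_sq (hc : 0 < c) (hp : -1 < p) :
    IntegrableOn (fun s : ℝ => (1 + s ^ p) * exp (-c * s ^ 2)) (Ioi 0) := by
  simp only [one_add_mul]
  exact (integrable_exp_neg_mul_sq hc).integrableOn.add (integrableOn_rpow_mul_exp_neg_mul_sq hc hp)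

lemma integrableOn_rpow_add_sq_mul_exp_neg_mul_sq (hc : 0 < c) (hp : -(1 / 2) < p) {m : ℝ}
    (hm : 0 ≤ m) :
    IntegrableOn (fun s : ℝ => (m + s ^ 2) ^ p * exp (-c * s ^ 2)) (Ioi 0) := by
  refine ((integrableOn_one_add_rpow_mul_exp_neg_mul_sq hc (p := 2 * p) (by linarith)).const_mul
    ((1 + m) ^ p)).mono' (by fun_prop) ?_
  filter_upwards [ae_restrict_mem measurableSet_Ioi] with s (hs : 0 < s)
  rw [norm_of_nonneg (by positivity)]
  exact rpow_add_sq_mul_exp_le hm hs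

lemma setIntegral_rpow_add_sq_mul_exp_neg_mul_sq_le (hc : 0 < c) (hp : -(1 / 2) < p) {m : ℝ}
    (hm : 0 ≤ m) :
    ∫ s in Ioi (0 : ℝ), (m + s ^ 2) ^ p * exp (-c * s ^ 2) ≤
      (∫ s in Ioi (0 : ℝ), (1 + s ^ (2 * p)) * exp (-c * s ^ 2)) * (1 + m) ^ p := by
  rw [mul_comm, ← integral_const_mul]
  refine setIntegral_mono_on (integrableOn_rpow_add_sq_mul_exp_neg_mul_sq hc hp hm)
    ((integrableOn_one_add_rpow_mul_exp_neg_mul_sq hc (by linarith)).const_mul _)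
    measurableSet_Ioi fun s hs => rpow_add_sq_mul_exp_le hm hs

lemma le_setIntegral_rpow_add_sq_mul_exp_neg_mul_sq (hc : 0 < c) (hp : -(1 / 2) < p) {m : ℝ}
    (hm : 0 ≤ m) :
    min 1 (4 ^ p) * exp (-(4 * c)) * (1 + m) ^ p ≤
      ∫ s in Ioi (0 : ℝ), (m + s ^ 2) ^ p * exp (-c * s ^ 2) := by
  have hint := integrableOn_rpow_add_sq_mul_exp_neg_mul_sq hc hp hm
  calc min 1 (4 ^ p) * exp (-(4 * c)) * (1 + m) ^ p
      = ∫ _ in Ioc (1 : ℝ) 2, min 1 (4 ^ p) * exp (-(4 * c)) * (1 + m) ^ p := by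
        rw [setIntegral_const, volume_real_Ioc]
        norm_num
    _ ≤ ∫ s in Ioc (1 : ℝ) 2, (m + s ^ 2) ^ p * exp (-c * s ^ 2) := by
        refine setIntegral_mono_on (integrable_const _)
          (hint.mono_set fun s hs => zero_lt_one.trans hs.1) measurableSet_Ioc
          fun s ⟨hs1, hs2⟩ => ?_
        have hmem : m + s ^ 2 ∈ uIcc (1 + m) (4 * (1 + m)) :=
          mem_uIcc.2 (Or.inl ⟨by nlinarith, by nlinarith⟩)
        have hpow : min 1 (4 ^ p) * (1 + m) ^ p ≤ (m + s ^ 2) ^ p := by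
          rw [min_mul_of_nonneg _ _ (by positivity), one_mul,
            ← mul_rpow (by norm_num) (by linarith)]
          exact min_le_rpow_of_mem_uIcc (by linarith) (by linarith) hmem
        rw [mul_right_comm]
        gcongr
        nlinarith [mul_le_mul_of_nonneg_left (show s ^ 2 ≤ 4 by nlinarith) hc.le]
    _ ≤ ∫ s in Ioi (0 : ℝ), (m + s ^ 2) ^ p * exp (-c * s ^ 2) :=
        setIntegral_mono_set hint (.of_forall fun s => by positivity)
          (.of_forall fun s hs => zero_lt_one.trans hs.1)

lemma exists_bounds_setIntegral_rpow_add_sq_mul_exp_neg_mul_sq (hc : 0 < c) (hp : -(1 / 2) < p) :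
    ∃ K₁ K₂ : ℝ, 0 < K₁ ∧ 0 < K₂ ∧ ∀ m : ℝ, 0 ≤ m →
      K₁ * (1 + m) ^ p ≤ ∫ s in Ioi (0 : ℝ), (m + s ^ 2) ^ p * exp (-c * s ^ 2) ∧
      ∫ s in Ioi (0 : ℝ), (m + s ^ 2) ^ p * exp (-c * s ^ 2) ≤ K₂ * (1 + m) ^ p := by
  set K₁ := min 1 (4 ^ p) * exp (-(4 * c))
  set K₂ := ∫ s in Ioi (0 : ℝ), (1 + s ^ (2 * p)) * exp (-c * s ^ 2)
  have hK₁ : 0 < K₁ := by positivity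
  have bounds (m : ℝ) (hm : 0 ≤ m) :=
    And.intro (le_setIntegral_rpow_add_sq_mul_exp_neg_mul_sq hc hp hm)
      (setIntegral_rpow_add_sq_mul_exp_neg_mul_sq_le hc hp hm)
  have hK₂ : 0 < K₂ := by
    have h := bounds 0 le_rfl
    simp only [add_zero, one_rpow, mul_one] at h
    exact hK₁.trans_le (h.1.trans h.2)
  exact ⟨K₁, K₂, hK₁, hK₂, bounds⟩

end GaussianWeight

lemma sqrt_div_rpow_mul_div_sqrt {β x t E : ℝ} (hx : 0 < x) (ht : 0 < t) :
    (√x / t) ^ (2 * (β - 1)) * (E / √x) = x ^ (β - 3 / 2) * E / t ^ (2 * (β - 1)) := by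
  rw [div_rpow (sqrt_nonneg x) ht.le, sqrt_eq_rpow, ← rpow_mul hx.le,
    show β - 3 / 2 = 1 / 2 * (2 * (β - 1)) - 1 / 2 by ring, rpow_sub hx]
  ring

lemma rpow_add_sqrt_div_mul_div_sqrt_bounds {β x s t E : ℝ} (hβ : 1 ≤ β) (hx : 0 < x)
    (hs : 0 ≤ s) (hsx : s ^ 2 ≤ x) (ht : 0 < t) (hE : 0 ≤ E) :
    x ^ (β - 3 / 2) * E / (2 * t) ^ (2 * (β - 1)) ≤
        ((s + √x) / (2 * t)) ^ (2 * (β - 1)) * (E / √x) ∧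
      ((s + √x) / (2 * t)) ^ (2 * (β - 1)) * (E / √x) ≤
        x ^ (β - 3 / 2) * E / t ^ (2 * (β - 1)) := by
  have hsx' : s ≤ √x := le_sqrt_of_sq_le hsx
  rw [← sqrt_div_rpow_mul_div_sqrt hx ht, ← sqrt_div_rpow_mul_div_sqrt hx (by positivity)]
  have hq : 0 ≤ 2 * (β - 1) := by linarith
  constructor
  · gcongr (?_ / _) ^ _ * _
    linarith
  · gcongr ?_ ^ _ * _
    rw [div_le_div_iff₀ (by positivity) ht]
    nlinarith

theorem stmt2 (c β : ℝ) (hc : 0 < c) (hβ : 1 < β) :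
    ∃ C₁ C₂ : ℝ, 0 < C₁ ∧ 0 < C₂ ∧ ∀ a b : ℝ, 0 < a → 0 < b →
      C₁ * (1 + 4*a*b) ^ (β - 3/2) / a ^ (2*(β-1)) ≤
        (∫ s in Set.Ioi (0:ℝ),
          ((s + Real.sqrt (4*a*b + s^2)) / (2*a)) ^ (2*(β-1)) *
            (Real.exp (-c * s^2) / Real.sqrt (4*a*b + s^2))) ∧
      (∫ s in Set.Ioi (0:ℝ),
          ((s + Real.sqrt (4*a*b + s^2)) / (2*a)) ^ (2*(β-1)) *
            (Real.exp (-c * s^2) / Real.sqrt (4*a*b + s^2))) ≤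
        C₂ * (1 + 4*a*b) ^ (β - 3/2) / a ^ (2*(β-1)) := by
  obtain ⟨K₁, K₂, hK₁, hK₂, hJ⟩ :=
    exists_bounds_setIntegral_rpow_add_sq_mul_exp_neg_mul_sq (p := β - 3 / 2) hc (by linarith)
  refine ⟨K₁ / 2 ^ (2 * (β - 1)), K₂, by positivity, hK₂, fun a b ha hb => ?_⟩
  have hm : 0 ≤ 4 * a * b := by positivity
  have hbounds : ∀ᵐ s ∂volume.restrict (Ioi (0 : ℝ)), _ :=
    (ae_restrict_mem measurableSet_Ioi).mono fun s (hs : 0 < s) =>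
      rpow_add_sqrt_div_mul_div_sqrt_bounds (x := 4 * a * b + s ^ 2) (E := exp (-c * s ^ 2))
        hβ.le (by positivity) hs.le (le_add_of_nonneg_left hm) ha (exp_pos _).le
  obtain ⟨hlow, hup⟩ := integral_le_integral_and_integral_le_integral
    (.of_forall fun s => by positivity) (hbounds.mono fun _ h => h.1) (hbounds.mono fun _ h => h.2)
    ((integrableOn_rpow_add_sq_mul_exp_neg_mul_sq hc (by linarith) hm).div_const _)
    (by fun_prop)
  rw [integral_div] at hlow hup
  constructor
  · calc K₁ / 2 ^ (2 * (β - 1)) * (1 + 4 * a * b) ^ (β - 3 / 2) / a ^ (2 * (β - 1))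
        = K₁ * (1 + 4 * a * b) ^ (β - 3 / 2) / (2 * a) ^ (2 * (β - 1)) := by
          rw [mul_rpow zero_le_two ha.le]; ring
      _ ≤ _ := by gcongr; exact (hJ _ hm).1
      _ ≤ _ := hlow
  · refine hup.trans ?_
    gcongr
    exact (hJ _ hm).2
end

section
/- Let c > 0, β > 1, and for a, b > 0 define f(a,b) = ∫₀^∞ u^{-β} exp(-c (√u · b - a/√u)²) du. Then there exist constants C₁, C₂ > 0 depending only on β and c such that C₁ (1+4ab)^{β-3/2} / a^{2(β-1)} ≤ f(a,b) ≤ C₂ (1+4ab)^{β-3/2} / a^{2(β-1)} for all a, b > 0. -/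
/-!
Substituting `u = (a / b) t` turns the exponent into `-c a b (t + t⁻¹ - 2)`, so
`f(a, b) = (a / b) ^ (1 - β) F(c a b)` with `F(κ) = ∫₀^∞ t ^ (-β) exp (-κ (t + t⁻¹ - 2)) dt`, and
`(a / b) ^ (1 - β) (a b) ^ (1 - β) = a ^ (-2 (β - 1))`. It remains to show
`F(c s) ≍ s ^ (1 - β) (1 + 4 s) ^ (β - 3/2)` for `s > 0`, i.e. `F(c s) ≍ s ^ (1 - β)` for `s ≤ 1/2`
and `F(c s) ≍ s ^ (-1/2)` for `s ≥ 1/2`.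

For the lower bounds, integrate over a window on which `s (t + t⁻¹ - 2) ≤ 1`: `(s, 2 s]` for small
`s`, `(1, 1 + s ^ (-1/2)]` for large `s`. For the upper bounds, on `(0, 1/2]` the inequality
`t + t⁻¹ - 2 ≥ 1/4 + 1/(8 t)` gives at most `exp (-c s / 4)` times a Gamma integral of size
`s ^ (1 - β)`; on `(1/2, 2]` the integrand is dominated by a Gaussian of width `s ^ (-1/2)`
centred at `1`; and on `(2, ∞)` the exponent is at most `-c s / 2`.
-/

open MeasureTheory Real Set Filter Asymptotics

namespace InverseGaussianIntegral

noncomputable def integrand (β κ t : ℝ) : ℝ := t ^ (-β) * exp (-κ * (t + t⁻¹ - 2))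

noncomputable def reducedIntegral (β κ : ℝ) : ℝ := ∫ t in Ioi 0, integrand β κ t

variable {β κ : ℝ}

lemma integrand_nonneg {t : ℝ} (ht : 0 ≤ t) : 0 ≤ integrand β κ t :=
  mul_nonneg (rpow_nonneg ht _) (exp_pos _).le

lemma reducedIntegral_nonneg : 0 ≤ reducedIntegral β κ :=
  setIntegral_nonneg measurableSet_Ioi fun _ ht => integrand_nonneg (le_of_lt ht)

lemma measurable_integrand : Measurable (integrand β κ) := by
  unfold integrand; fun_prop

/-- The substitution `t = x⁻¹` turns `t ^ (-β) * exp (-(κ * t⁻¹)) dt` into a Gamma integrand. -/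
lemma inv_substitution {x : ℝ} (hx : 0 < x) :
    (|(-1 : ℝ)| * x ^ ((-1 : ℝ) - 1)) •
        ((x ^ (-1 : ℝ)) ^ (-β) * exp (-(κ * (x ^ (-1 : ℝ))⁻¹))) =
      x ^ (β - 1 - 1) * exp (-(κ * x)) := by
  rw [rpow_neg_one, inv_inv, inv_rpow hx.le, ← rpow_neg hx.le, neg_neg, smul_eq_mul, abs_neg,
    abs_one, one_mul, ← mul_assoc, ← rpow_add hx]
  ring_nf

lemma integrableOn_rpow_neg_mul_exp_neg_inv (hβ : 1 < β) (hκ : 0 < κ) :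
    IntegrableOn (fun t => t ^ (-β) * exp (-(κ * t⁻¹))) (Ioi 0) := by
  refine (integrableOn_Ioi_comp_rpow_iff _ (p := -1) (by norm_num)).mp ?_
  refine (integrableOn_rpow_mul_exp_neg_mul_rpow (s := β - 1 - 1) (p := 1) (by linarith) one_pos
    hκ).congr_fun (fun x hx => ?_) measurableSet_Ioi
  dsimp only
  rw [inv_substitution hx, rpow_one, neg_mul]

lemma integral_rpow_neg_mul_exp_neg_inv (hβ : 1 < β) (hκ : 0 < κ) :
    ∫ t in Ioi 0, t ^ (-β) * exp (-(κ * t⁻¹)) = (1 / κ) ^ (β - 1) * Gamma (β - 1) := by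
  rw [← integral_rpow_mul_exp_neg_mul_Ioi (by linarith) hκ,
    ← integral_comp_rpow_Ioi _ (p := -1) (by norm_num)]
  exact setIntegral_congr_fun measurableSet_Ioi fun x hx => inv_substitution hx

lemma integrableOn_integrand (hβ : 1 < β) (hκ : 0 < κ) :
    IntegrableOn (integrand β κ) (Ioi 0) := by
  refine ((integrableOn_rpow_neg_mul_exp_neg_inv hβ hκ).const_mul (exp (2 * κ))).mono'
    measurable_integrand.aestronglyMeasurable.restrict ?_
  filter_upwards [ae_restrict_mem measurableSet_Ioi] with t (ht : 0 < t)
  rw [norm_of_nonneg (integrand_nonneg ht.le), integrand, mul_left_comm, ← exp_add]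
  gcongr
  nlinarith

lemma setIntegral_Ioi_eq_add {f : ℝ → ℝ} {p q : ℝ} (hpq : p ≤ q)
    (hf : IntegrableOn f (Ioi p)) :
    ∫ t in Ioi p, f t = (∫ t in Ioc p q, f t) + ∫ t in Ioi q, f t := by
  rw [← intervalIntegral.integral_interval_add_Ioi hf (hf.mono_set (Ioi_subset_Ioi hpq)),
    intervalIntegral.integral_of_le hpq]

lemma mul_add_inv_sub_two {t : ℝ} (ht : t ≠ 0) : t * (t + t⁻¹ - 2) = (t - 1) ^ 2 := by
  field_simp; ring

lemma add_inv_sub_two_nonneg {t : ℝ} (ht : 0 < t) : 0 ≤ t + t⁻¹ - 2 := by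
  nlinarith [mul_add_inv_sub_two ht.ne', sq_nonneg (t - 1)]

lemma rpow_neg_le_two_rpow {t : ℝ} (hβ : 0 ≤ β) (ht : 1 / 2 ≤ t) : t ^ (-β) ≤ 2 ^ β := by
  calc t ^ (-β) ≤ (1 / 2) ^ (-β) := rpow_le_rpow_of_nonpos (by norm_num) ht (by linarith)
    _ = 2 ^ β := by rw [one_div, inv_rpow zero_le_two, rpow_neg zero_le_two, inv_inv]

lemma setIntegral_Ioc_zero_half_le (hβ : 1 < β) (hκ : 0 < κ) :
    ∫ t in Ioc 0 (1 / 2), integrand β κ t ≤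
      exp (-(κ / 4)) * (8 ^ (β - 1) * Gamma (β - 1) * κ ^ (1 - β)) := by
  have hint := integrableOn_rpow_neg_mul_exp_neg_inv hβ (by positivity : 0 < κ / 8)
  calc ∫ t in Ioc 0 (1 / 2), integrand β κ t
      ≤ ∫ t in Ioc 0 (1 / 2), exp (-(κ / 4)) * (t ^ (-β) * exp (-(κ / 8 * t⁻¹))) := by
        refine setIntegral_mono_on ((integrableOn_integrand hβ hκ).mono_set Ioc_subset_Ioi_self)
          ((hint.mono_set Ioc_subset_Ioi_self).const_mul _) measurableSet_Ioc
          fun t ⟨ht0, ht⟩ => ?_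
        rw [integrand, mul_left_comm, ← exp_add]
        gcongr
        -- `8 t (t + t⁻¹ - 9/4 - t⁻¹/8) = (1 - 2t)(7 - 4t)`
        have key : 9 / 4 ≤ t + 7 / 8 * t⁻¹ := by
          have := mul_inv_cancel₀ ht0.ne'
          nlinarith [mul_nonneg (mul_nonneg (by linarith : (0:ℝ) ≤ 1 - 2 * t)
            (by linarith : (0:ℝ) ≤ 7 - 4 * t)) (inv_nonneg.2 ht0.le)]
        nlinarith [mul_le_mul_of_nonneg_left key hκ.le]
    _ ≤ exp (-(κ / 4)) * ∫ t in Ioi 0, t ^ (-β) * exp (-(κ / 8 * t⁻¹)) := by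
        rw [integral_const_mul]
        refine mul_le_mul_of_nonneg_left (setIntegral_mono_set hint ?_
          Ioc_subset_Ioi_self.eventuallyLE) (exp_pos _).le
        filter_upwards [ae_restrict_mem measurableSet_Ioi] with t (ht : 0 < t)
        positivity
    _ = exp (-(κ / 4)) * (8 ^ (β - 1) * Gamma (β - 1) * κ ^ (1 - β)) := by
        have h8 : (8 / κ) ^ (β - 1) = 8 ^ (β - 1) * κ ^ (1 - β) := by
          rw [div_rpow (by norm_num) hκ.le, div_eq_mul_inv, ← rpow_neg hκ.le, neg_sub]
        rw [integral_rpow_neg_mul_exp_neg_inv hβ (by positivity), one_div_div, h8]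
        ring

lemma setIntegral_Ioc_half_two_le (hβ : 0 ≤ β) (hκ : 0 < κ) :
    ∫ t in Ioc (1 / 2) 2, integrand β κ t ≤ 2 ^ β * √(π / (κ / 2)) := by
  have hgauss : Integrable fun t : ℝ => exp (-(κ / 2) * (t - 1) ^ 2) :=
    (integrable_exp_neg_mul_sq (by positivity)).comp_sub_right 1
  calc ∫ t in Ioc (1 / 2) 2, integrand β κ t
      ≤ ∫ t in Ioc (1 / 2) 2, 2 ^ β * exp (-(κ / 2) * (t - 1) ^ 2) := by
        refine integral_mono_of_nonneg ?_ (hgauss.const_mul _).integrableOn ?_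
        · filter_upwards [ae_restrict_mem measurableSet_Ioc] with t ht
          exact integrand_nonneg (by linarith [ht.1])
        · filter_upwards [ae_restrict_mem measurableSet_Ioc] with t ⟨ht1, ht2⟩
          have ht0 : 0 < t := by linarith
          refine mul_le_mul (rpow_neg_le_two_rpow hβ ht1.le) (exp_le_exp.2 ?_) (exp_pos _).le
            (by positivity)
          have h : (t - 1) ^ 2 ≤ 2 * (t + t⁻¹ - 2) := by
            nlinarith [mul_add_inv_sub_two ht0.ne', add_inv_sub_two_nonneg ht0]
          nlinarith [mul_le_mul_of_nonneg_left h hκ.le]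
    _ ≤ ∫ t, 2 ^ β * exp (-(κ / 2) * (t - 1) ^ 2) :=
        setIntegral_le_integral (hgauss.const_mul _) (.of_forall fun _ => by positivity)
    _ = 2 ^ β * √(π / (κ / 2)) := by
        rw [integral_const_mul, integral_sub_right_eq_self (fun t => exp (-(κ / 2) * t ^ 2)),
          integral_gaussian]

lemma setIntegral_Ioi_le {p m : ℝ} (hβ : 1 < β) (hκ : 0 ≤ κ) (hp : 0 < p)
    (hm : ∀ t ∈ Ioi p, m ≤ t + t⁻¹ - 2) :
    ∫ t in Ioi p, integrand β κ t ≤ exp (-(κ * m)) * ∫ t in Ioi p, t ^ (-β) := by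
  rw [← integral_const_mul]
  refine integral_mono_of_nonneg ?_
    ((integrableOn_Ioi_rpow_of_lt (by linarith : -β < -1) hp).const_mul _) ?_
  · filter_upwards [ae_restrict_mem measurableSet_Ioi] with t (ht : p < t)
    exact integrand_nonneg (by linarith)
  · filter_upwards [ae_restrict_mem measurableSet_Ioi] with t ht
    have ht0 : 0 < t := hp.trans ht
    rw [integrand, mul_comm (t ^ (-β))]
    refine mul_le_mul_of_nonneg_right (exp_le_exp.2 ?_) (rpow_nonneg ht0.le _)
    nlinarith [mul_le_mul_of_nonneg_left (hm t ht) hκ]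

lemma le_reducedIntegral_of_window {p q M : ℝ} (hβ : 1 < β) (hκ : 0 < κ) (hp : 0 < p)
    (hpq : p ≤ q) (hM : ∀ t ∈ Ioc p q, κ * (t + t⁻¹ - 2) ≤ M) :
    q ^ (-β) * exp (-M) * (q - p) ≤ reducedIntegral β κ := by
  have hint := integrableOn_integrand hβ hκ
  calc q ^ (-β) * exp (-M) * (q - p) ≤ ∫ t in Ioc p q, integrand β κ t := by
        rw [← volume_real_Ioc_of_le hpq]
        refine setIntegral_ge_of_const_le_real measurableSet_Ioc (by simp)
          (fun t ⟨ht1, ht2⟩ => ?_) (hint.mono_set fun t ht => hp.trans ht.1)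
        have ht0 : 0 < t := hp.trans ht1
        exact mul_le_mul (rpow_le_rpow_of_nonpos ht0 ht2 (by linarith))
          (exp_le_exp.2 (by linarith [hM t ⟨ht1, ht2⟩])) (exp_pos _).le (rpow_nonneg ht0.le _)
    _ ≤ reducedIntegral β κ :=
        setIntegral_mono_set hint
          ((ae_restrict_mem measurableSet_Ioi).mono fun t ht => integrand_nonneg (le_of_lt ht))
          (show Ioc p q ⊆ Ioi 0 from fun t ht => hp.trans ht.1).eventuallyLE

lemma inv_sqrt_le_two {s : ℝ} (hs : 1 / 2 ≤ s) : (√s)⁻¹ ≤ 2 := by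
  have : 1 / 2 ≤ √s := le_sqrt_of_sq_le (by linarith)
  rw [inv_le_comm₀ (by linarith) two_pos]
  linarith

lemma exp_neg_mul_isBigO_inv_sqrt {k : ℝ} (hk : 0 < k) :
    (fun s => exp (-(k * s))) =O[𝓟 (Ici (1 / 2))] fun s => (√s)⁻¹ := by
  refine isBigO_principal.2 ⟨2 * k⁻¹, fun s (hs : 1 / 2 ≤ s) => ?_⟩
  have hs0 : 0 < s := by linarith
  have hsq : 0 < √s := sqrt_pos.2 hs0
  rw [norm_of_nonneg (exp_pos _).le, norm_of_nonneg (inv_nonneg.2 hsq.le)]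
  calc exp (-(k * s)) ≤ (k * s)⁻¹ := by
        rw [exp_neg]
        exact inv_anti₀ (by positivity) (by linarith [add_one_le_exp (k * s)])
    _ = k⁻¹ * (√s)⁻¹ * (√s)⁻¹ := by
        rw [mul_assoc, ← mul_inv (√s), mul_self_sqrt hs0.le, mul_inv]
    _ ≤ k⁻¹ * 2 * (√s)⁻¹ := by gcongr; exact inv_sqrt_le_two hs
    _ = 2 * k⁻¹ * (√s)⁻¹ := by ring

lemma reducedIntegral_le (hβ : 1 < β) (hκ : 0 < κ) :
    reducedIntegral β κ ≤ exp (-(κ / 4)) * (8 ^ (β - 1) * Gamma (β - 1) * κ ^ (1 - β)) +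
      2 ^ β * √(π / (κ / 2)) + (∫ t in Ioi (2 : ℝ), t ^ (-β)) * exp (-(κ / 2)) := by
  have hint := integrableOn_integrand hβ hκ
  have hC := setIntegral_Ioi_le hβ hκ.le two_pos (m := 1 / 2) fun t (ht : 2 < t) => by
    have ht0 : 0 < t := by linarith
    nlinarith [mul_add_inv_sub_two ht0.ne', add_inv_sub_two_nonneg ht0]
  rw [reducedIntegral, setIntegral_Ioi_eq_add (q := 1 / 2) (by norm_num) hint,
    setIntegral_Ioi_eq_add (q := 2) (by norm_num) (hint.mono_set (Ioi_subset_Ioi (by norm_num)))]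
  rw [← div_eq_mul_one_div, mul_comm (exp _)] at hC
  linarith [setIntegral_Ioc_zero_half_le hβ hκ,
    setIntegral_Ioc_half_two_le (β := β) (by linarith) hκ]

section Regimes

variable {c : ℝ}

lemma reducedIntegral_isBigO_of_le_half (hc : 0 < c) (hβ : 1 < β) :
    (fun s => reducedIntegral β (c * s)) =O[𝓟 (Ioc 0 (1 / 2))] fun s => s ^ (1 - β) := by
  set T := ∫ t in Ioi (1 / 2 : ℝ), t ^ (-β)
  refine isBigO_principal.2 ⟨8 ^ (β - 1) * Gamma (β - 1) * c ^ (1 - β) + T,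
    fun s ⟨hs, hs2⟩ => ?_⟩
  have hcs : 0 < c * s := mul_pos hc hs
  have hT : 0 ≤ T := setIntegral_nonneg measurableSet_Ioi fun t (ht : 1 / 2 < t) =>
    rpow_nonneg (by linarith) _
  have hΓ : 0 < Gamma (β - 1) := Gamma_pos_of_pos (by linarith)
  have h1 : 1 ≤ s ^ (1 - β) := one_le_rpow_of_pos_of_le_one_of_nonpos hs (by linarith) (by linarith)
  have hA := setIntegral_Ioc_zero_half_le hβ hcs
  have hrest := setIntegral_Ioi_le hβ hcs.le one_half_pos (m := 0)
    fun t (ht : 1 / 2 < t) => add_inv_sub_two_nonneg (by linarith)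
  rw [mul_zero, neg_zero, exp_zero, one_mul] at hrest
  rw [mul_rpow hc.le hs.le] at hA
  have hexp : exp (-(c * s / 4)) ≤ 1 := exp_le_one_iff.2 (by linarith)
  rw [norm_of_nonneg reducedIntegral_nonneg, norm_of_nonneg (rpow_nonneg hs.le _), reducedIntegral,
    setIntegral_Ioi_eq_add (q := 1 / 2) (by norm_num) (integrableOn_integrand hβ hcs)]
  calc _ ≤ 8 ^ (β - 1) * Gamma (β - 1) * (c ^ (1 - β) * s ^ (1 - β)) + T := by
        refine add_le_add (hA.trans ?_) hrest
        exact mul_le_of_le_one_left (by positivity) hexp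
    _ ≤ _ := by nlinarith

lemma rpow_isBigO_reducedIntegral_of_le_half (hc : 0 < c) (hβ : 1 < β) :
    (fun s => s ^ (1 - β)) =O[𝓟 (Ioc 0 (1 / 2))] fun s => reducedIntegral β (c * s) := by
  refine isBigO_principal.2 ⟨2 ^ β * exp c, fun s ⟨hs, hs2⟩ => ?_⟩
  have hwindow := le_reducedIntegral_of_window hβ (mul_pos hc hs) hs (by linarith : s ≤ 2 * s)
    (M := c) fun t ⟨ht1, ht2⟩ => by
      have ht0 : 0 < t := hs.trans ht1
      -- on `(s, 2s]` we have `t + t⁻¹ - 2 ≤ t⁻¹ ≤ s⁻¹`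
      have h1 : s * t⁻¹ ≤ 1 := by
        rw [← div_eq_mul_inv, div_le_one ht0]; exact ht1.le
      nlinarith [mul_le_mul_of_nonneg_left h1 hc.le, mul_pos hc hs]
  rw [norm_of_nonneg reducedIntegral_nonneg, norm_of_nonneg (rpow_nonneg hs.le _)]
  calc s ^ (1 - β) = 2 ^ β * exp c * ((2 * s) ^ (-β) * exp (-c) * (2 * s - s)) := by
        rw [mul_rpow zero_le_two hs.le, rpow_neg zero_le_two, sub_eq_add_neg 1 β, rpow_add hs,
          rpow_one, exp_neg]
        field_simp
        ring
    _ ≤ _ := by gcongr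

lemma reducedIntegral_isBigO_of_half_le (hc : 0 < c) (hβ : 1 < β) :
    (fun s => reducedIntegral β (c * s)) =O[𝓟 (Ici (1 / 2))] fun s => (√s)⁻¹ := by
  have hrpow : (fun s => (c * s) ^ (1 - β)) =O[𝓟 (Ici (1 / 2))] fun _ => (1 : ℝ) :=
    isBigO_principal.2 ⟨(c / 2) ^ (1 - β), fun s (hs : 1 / 2 ≤ s) => by
      rw [norm_of_nonneg (rpow_nonneg (by positivity) _), norm_one, mul_one]
      exact rpow_le_rpow_of_nonpos (by positivity) (by nlinarith) (by linarith)⟩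
  have hgauss : (fun s => 2 ^ β * √(π / (c / 2 * s))) =O[𝓟 (Ici (1 / 2))] fun s => (√s)⁻¹ :=
    isBigO_principal.2 ⟨2 ^ β * √(2 * π / c), fun s (hs : 1 / 2 ≤ s) => by
      rw [norm_of_nonneg (by positivity), norm_of_nonneg (by positivity),
        show π / (c / 2 * s) = 2 * π / c / s by field_simp, sqrt_div (by positivity),
        div_eq_mul_inv, mul_assoc]⟩
  have hdecay : (fun s => exp (-(c / 4 * s)) * (8 ^ (β - 1) * Gamma (β - 1) * (c * s) ^ (1 - β)))
      =O[𝓟 (Ici (1 / 2))] fun s => (√s)⁻¹ := by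
    simpa only [mul_one] using
      (exp_neg_mul_isBigO_inv_sqrt (k := c / 4) (by positivity)).mul (hrpow.const_mul_left _)
  refine (isBigO_principal.2 ⟨1, fun s hs => ?_⟩).trans ((hdecay.add hgauss).add
    ((exp_neg_mul_isBigO_inv_sqrt (k := c / 2) (by positivity)).const_mul_left
      (∫ t in Ioi (2 : ℝ), t ^ (-β))))
  have hbound := reducedIntegral_le hβ (mul_pos hc (lt_of_lt_of_le one_half_pos hs))
  rw [show c * s / 4 = c / 4 * s by ring, show c * s / 2 = c / 2 * s by ring] at hbound
  rw [one_mul, norm_of_nonneg reducedIntegral_nonneg,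
    norm_of_nonneg (reducedIntegral_nonneg.trans hbound)]
  exact hbound

lemma inv_sqrt_isBigO_reducedIntegral_of_half_le (hc : 0 < c) (hβ : 1 < β) :
    (fun s => (√s)⁻¹) =O[𝓟 (Ici (1 / 2))] fun s => reducedIntegral β (c * s) := by
  refine isBigO_principal.2 ⟨3 ^ β * exp c, fun s (hs : 1 / 2 ≤ s) => ?_⟩
  have hs0 : 0 < s := by linarith
  set δ := (√s)⁻¹
  have hδ0 : 0 < δ := inv_pos.2 (sqrt_pos.2 hs0)
  have hδ2 : δ ≤ 2 := inv_sqrt_le_two hs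
  have hδsq : δ ^ 2 = s⁻¹ := by rw [inv_pow, sq_sqrt hs0.le]
  have hwindow := le_reducedIntegral_of_window hβ (mul_pos hc hs0) one_pos
    (le_add_of_nonneg_right hδ0.le) (M := c) fun t ⟨ht1, ht2⟩ => by
      have ht0 : 0 < t := one_pos.trans ht1
      -- on `(1, 1 + δ]` we have `t + t⁻¹ - 2 ≤ (t - 1) ^ 2 ≤ δ ^ 2 = s⁻¹`
      have h1 : t + t⁻¹ - 2 ≤ s⁻¹ := by
        nlinarith [mul_add_inv_sub_two ht0.ne', add_inv_sub_two_nonneg ht0]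
      have h2 : s * (t + t⁻¹ - 2) ≤ 1 := by
        calc s * (t + t⁻¹ - 2) ≤ s * s⁻¹ := mul_le_mul_of_nonneg_left h1 hs0.le
          _ = 1 := mul_inv_cancel₀ hs0.ne'
      nlinarith [mul_le_mul_of_nonneg_left h2 hc.le]
  rw [norm_of_nonneg reducedIntegral_nonneg, norm_of_nonneg hδ0.le]
  calc δ = 3 ^ β * exp c * (3 ^ (-β) * exp (-c) * δ) := by
        rw [rpow_neg (by norm_num), exp_neg]
        field_simp
    _ ≤ 3 ^ β * exp c * ((1 + δ) ^ (-β) * exp (-c) * (1 + δ - 1)) := by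
        rw [add_sub_cancel_left]
        gcongr 3 ^ β * exp c * (?_ * _ * _)
        exact rpow_le_rpow_of_nonpos (by positivity) (by linarith) (by linarith)
    _ ≤ _ := by gcongr

end Regimes

lemma rpow_mul_one_add_rpow_isTheta_of_le_half :
    (fun s : ℝ => s ^ (1 - β) * (1 + 4 * s) ^ (β - 3 / 2)) =Θ[𝓟 (Ioc 0 (1 / 2))]
      fun s => s ^ (1 - β) := by
  have h : (fun s : ℝ => 1 + 4 * s) =Θ[𝓟 (Ioc 0 (1 / 2))] fun _ => (1 : ℝ) :=
    ⟨isBigO_principal.2 ⟨3, fun s ⟨hs, hs2⟩ => by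
        rw [norm_of_nonneg (by linarith), norm_one]; linarith⟩,
      isBigO_principal.2 ⟨1, fun s ⟨hs, hs2⟩ => by
        rw [norm_of_nonneg (by linarith : (0 : ℝ) ≤ 1 + 4 * s), norm_one]; linarith⟩⟩
  have hpow : (fun s : ℝ => (1 + 4 * s) ^ (β - 3 / 2)) =Θ[𝓟 (Ioc 0 (1 / 2))]
      fun _ => (1 : ℝ) ^ (β - 3 / 2) :=
    h.rpow (eventually_principal.2 fun s ⟨hs, _⟩ => by dsimp only [Pi.zero_apply]; linarith)
      (.of_forall fun _ => zero_le_one)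
  simpa only [one_rpow, mul_one] using (isTheta_refl (fun s : ℝ => s ^ (1 - β)) _).mul hpow

lemma rpow_mul_one_add_rpow_isTheta_of_half_le :
    (fun s : ℝ => s ^ (1 - β) * (1 + 4 * s) ^ (β - 3 / 2)) =Θ[𝓟 (Ici (1 / 2))]
      fun s => (√s)⁻¹ := by
  have h : (fun s : ℝ => 1 + 4 * s) =Θ[𝓟 (Ici (1 / 2))] fun s => s :=
    ⟨isBigO_principal.2 ⟨6, fun s (hs : 1 / 2 ≤ s) => by
        rw [norm_of_nonneg (by linarith), norm_of_nonneg (by linarith)]; linarith⟩,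
      isBigO_principal.2 ⟨1, fun s (hs : 1 / 2 ≤ s) => by
        rw [norm_of_nonneg (by linarith), norm_of_nonneg (by linarith : (0 : ℝ) ≤ 1 + 4 * s)]
        linarith⟩⟩
  have hpow : (fun s : ℝ => (1 + 4 * s) ^ (β - 3 / 2)) =Θ[𝓟 (Ici (1 / 2))]
      fun s => s ^ (β - 3 / 2) :=
    h.rpow
      (eventually_principal.2 fun s (hs : 1 / 2 ≤ s) => by dsimp only [Pi.zero_apply]; linarith)
      (eventually_principal.2 fun s (hs : 1 / 2 ≤ s) => by dsimp only [Pi.zero_apply]; linarith)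
  refine ((isTheta_refl (fun s : ℝ => s ^ (1 - β)) _).mul hpow).trans_eventuallyEq
    (eventually_principal.2 fun s (hs : 1 / 2 ≤ s) => ?_)
  show s ^ (1 - β) * s ^ (β - 3 / 2) = (√s)⁻¹
  rw [← rpow_add (by linarith), sqrt_eq_rpow, ← rpow_neg (by linarith)]
  ring_nf

theorem reducedIntegral_isTheta {c : ℝ} (hc : 0 < c) (hβ : 1 < β) :
    (fun s => reducedIntegral β (c * s)) =Θ[𝓟 (Ioi 0)]
      fun s => s ^ (1 - β) * (1 + 4 * s) ^ (β - 3 / 2) := by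
  have hsmall : (fun s => reducedIntegral β (c * s)) =Θ[𝓟 (Ioc 0 (1 / 2))] fun s => s ^ (1 - β) :=
    ⟨reducedIntegral_isBigO_of_le_half hc hβ, rpow_isBigO_reducedIntegral_of_le_half hc hβ⟩
  have hlarge : (fun s => reducedIntegral β (c * s)) =Θ[𝓟 (Ici (1 / 2))] fun s => (√s)⁻¹ :=
    ⟨reducedIntegral_isBigO_of_half_le hc hβ, inv_sqrt_isBigO_reducedIntegral_of_half_le hc hβ⟩
  rw [← Ioc_union_Ici_eq_Ioi one_half_pos, ← sup_principal]
  exact (hsmall.trans rpow_mul_one_add_rpow_isTheta_of_le_half.symm).sup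
    (hlarge.trans rpow_mul_one_add_rpow_isTheta_of_half_le.symm)

lemma sq_sqrt_mul_sub_div_sqrt {a b u : ℝ} (hu : 0 < u) :
    (√u * b - a / √u) ^ 2 = u * b ^ 2 - 2 * a * b + a ^ 2 / u := by
  have hsq : √u ^ 2 = u := sq_sqrt hu.le
  have hne : √u ≠ 0 := (sqrt_pos.2 hu).ne'
  field_simp
  rw [hsq]
  ring

theorem integral_eq_rpow_mul_reducedIntegral {a b c : ℝ} (ha : 0 < a) (hb : 0 < b) :
    ∫ u in Ioi 0, u ^ (-β) * exp (-c * (√u * b - a / √u) ^ 2) =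
      (a / b) ^ (1 - β) * reducedIntegral β (c * (a * b)) := by
  have hk : 0 < a / b := div_pos ha hb
  have h := integral_comp_mul_left_Ioi (fun u => u ^ (-β) * exp (-c * (√u * b - a / √u) ^ 2)) 0 hk
  rw [mul_zero, smul_eq_mul, eq_inv_mul_iff_mul_eq₀ hk.ne'] at h
  rw [← h, reducedIntegral, ← integral_const_mul, ← integral_const_mul]
  refine setIntegral_congr_fun measurableSet_Ioi fun t (ht : 0 < t) => ?_
  rw [sq_sqrt_mul_sub_div_sqrt (mul_pos hk ht), integrand, mul_rpow hk.le ht.le, sub_eq_add_neg 1 β,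
    rpow_add hk, rpow_one]
  field_simp
  ring_nf

lemma div_rpow_mul_mul_rpow {a b : ℝ} (ha : 0 < a) (hb : 0 < b) :
    (a / b) ^ (1 - β) * (a * b) ^ (1 - β) = (a ^ (2 * (β - 1)))⁻¹ := by
  rw [← mul_rpow (by positivity) (by positivity), show a / b * (a * b) = a ^ 2 by field_simp,
    ← rpow_natCast, ← rpow_mul ha.le, ← rpow_neg ha.le]
  congr 1
  push_cast
  ring

end InverseGaussianIntegral

open InverseGaussianIntegral in
theorem stmt3 (c β : ℝ) (hc : 0 < c) (hβ : 1 < β) :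
    ∃ C₁ C₂ : ℝ, 0 < C₁ ∧ 0 < C₂ ∧ ∀ a b : ℝ, 0 < a → 0 < b →
      C₁ * (1 + 4*a*b) ^ (β - 3/2) / a ^ (2*(β-1)) ≤
        (∫ u in Set.Ioi (0:ℝ),
          u ^ (-β) * Real.exp (-c * (Real.sqrt u * b - a / Real.sqrt u)^2)) ∧
      (∫ u in Set.Ioi (0:ℝ),
          u ^ (-β) * Real.exp (-c * (Real.sqrt u * b - a / Real.sqrt u)^2)) ≤
        C₂ * (1 + 4*a*b) ^ (β - 3/2) / a ^ (2*(β-1)) := by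
  obtain ⟨C₂, hC₂, hupper⟩ := (reducedIntegral_isTheta hc hβ).isBigO.exists_pos
  obtain ⟨C, hC, hlower⟩ := (reducedIntegral_isTheta hc hβ).isBigO_symm.exists_pos
  rw [isBigOWith_principal] at hupper hlower
  refine ⟨C⁻¹, C₂, inv_pos.2 hC, hC₂, fun a b ha hb => ?_⟩
  have hab : 0 < a * b := mul_pos ha hb
  have hG : 0 ≤ (a * b) ^ (1 - β) * (1 + 4 * (a * b)) ^ (β - 3 / 2) := by positivity
  have hscale : ∀ D, D * (1 + 4 * a * b) ^ (β - 3 / 2) / a ^ (2 * (β - 1)) =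
      (a / b) ^ (1 - β) * (D * ((a * b) ^ (1 - β) * (1 + 4 * (a * b)) ^ (β - 3 / 2))) := fun D => by
    rw [show ∀ x y z : ℝ, x * (D * (y * z)) = D * z * (x * y) by intros; ring,
      div_rpow_mul_mul_rpow ha hb, mul_assoc 4 a b, div_eq_mul_inv]
  have hup := hupper (a * b) hab
  have hlow := hlower (a * b) hab
  rw [norm_of_nonneg reducedIntegral_nonneg, norm_of_nonneg hG] at hup hlow
  rw [integral_eq_rpow_mul_reducedIntegral ha hb, hscale, hscale]
  exact ⟨mul_le_mul_of_nonneg_left ((inv_mul_le_iff₀ hC).2 hlow) (by positivity),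
    mul_le_mul_of_nonneg_left hup (by positivity)⟩
end

section
/- Let c > 0 and β ≥ 3/2. Then for all a, b > 0, ∫₀^∞ u^{-β} exp(-c(√u·b - a/√u)²) du ≤ C · (1+4ab)^{β-3/2} / a^{2(β-1)}, where C = 2 ∫₀^∞ (max(1,r))^{β-3/2} r^{-1/2} e^{-cr} dr. In particular, if β = 3/2 then one may take C = √(4π/c). -/
/-!
Substitute `t = √u b - a / √u`, an increasing bijection `(0, ∞) → ℝ` with
`dt/du = (b u + a) / (2 u √u)`. The algebraic inequality `a² ≤ (1 + 4ab) max u (b u - a)²`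
gives `u⁻¹ ≤ (1 + 4ab) max 1 t² / a²`, and `u^(-3/2) ≤ (2 / a) dt/du`; hence
`u^(-β) ≤ 2 (1 + 4ab)^(β-3/2) a^(-2(β-1)) max 1 t² ^ (β-3/2) dt/du`. Integrating reduces
the bound to `∫_ℝ max 1 t² ^ (β-3/2) e^(-c t²) dt`, which becomes
`∫₀^∞ max 1 r ^ (β-3/2) r^(-1/2) e^(-c r) dr` under `r = t²` and is the Gaussian integral `√(π / c)` when `β = 3/2`.
-/

open MeasureTheory Real Set

theorem integrable_of_even_of_integrableOn_Ioi {E : Type*} [NormedAddCommGroup E] {f : ℝ → E}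
    (heven : ∀ x, f (-x) = f x) (hf : IntegrableOn f (Ioi 0)) : Integrable f := by
  rw [← integrableOn_univ, ← Iic_union_Ioi (a := (0 : ℝ)), integrableOn_union]
  refine ⟨?_, hf⟩
  have hneg : MeasurableEmbedding fun x : ℝ => -x := (Homeomorph.neg ℝ).measurableEmbedding
  rw [← Measure.map_neg_eq_self (volume : Measure ℝ), hneg.integrableOn_map_iff]
  simp only [Function.comp_def, heven, neg_preimage, neg_Iic, neg_zero]
  exact (integrableOn_Ici_iff_integrableOn_Ioi enorm_ne_top).mpr hf

theorem integrable_max_one_sq_rpow_mul_exp_neg_mul_sq {c γ : ℝ} (hc : 0 < c) (hγ : 0 ≤ γ) :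
    Integrable fun t : ℝ => max 1 (t ^ 2) ^ γ * exp (-c * t ^ 2) := by
  refine integrable_of_even_of_integrableOn_Ioi (fun t => by simp only [neg_sq]) ?_
  refine Integrable.mono' ((integrable_exp_neg_mul_sq hc).integrableOn.add
    (integrableOn_rpow_mul_exp_neg_mul_sq hc (by linarith : (-1 : ℝ) < 2 * γ))) ?_ ?_
  · exact (by fun_prop : Continuous fun t : ℝ => max 1 (t ^ 2) ^ γ * exp (-c * t ^ 2))
      |>.aestronglyMeasurable
  · refine ae_restrict_of_forall_mem measurableSet_Ioi fun t ht => ?_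
    have hmax : max 1 (t ^ 2) ^ γ ≤ 1 + t ^ (2 * γ) := by
      rw [Real.rpow_mul (le_of_lt ht), Real.rpow_two]
      rcases le_total (t ^ 2) 1 with h | h
      · rw [max_eq_left h, Real.one_rpow]
        linarith [Real.rpow_nonneg (sq_nonneg t) γ]
      · rw [max_eq_right h]
        linarith
    rw [Real.norm_of_nonneg (by positivity), Pi.add_apply]
    linarith [mul_le_mul_of_nonneg_right hmax (exp_pos (-c * t ^ 2)).le]

theorem integral_Ioi_max_one_rpow_mul_rpow_mul_exp_eq (c γ : ℝ) :
    ∫ r in Ioi 0, max 1 r ^ γ * r ^ (-(1 : ℝ) / 2) * exp (-c * r) =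
      ∫ t, max 1 (t ^ 2) ^ γ * exp (-c * t ^ 2) := by
  rw [← integral_comp_rpow_Ioi_of_pos (p := 2) two_pos]
  have hsq : ∫ t, max 1 (t ^ 2) ^ γ * exp (-c * t ^ 2) =
      2 * ∫ t in Ioi 0, max 1 (t ^ 2) ^ γ * exp (-c * t ^ 2) := by
    have h := integral_comp_abs (f := fun t => max 1 (t ^ 2) ^ γ * exp (-c * t ^ 2))
    simp only [sq_abs] at h
    exact h
  rw [hsq, ← integral_const_mul]
  refine setIntegral_congr_fun measurableSet_Ioi fun t (ht : 0 < t) => ?_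
  have hinv : (t ^ (2 : ℝ)) ^ (-(1 : ℝ) / 2) = t⁻¹ := by
    rw [← Real.rpow_mul ht.le]
    norm_num [Real.rpow_neg_one]
  rw [smul_eq_mul, hinv, Real.rpow_two]
  norm_num
  field_simp

theorem sq_le_one_add_mul_mul_max {a b : ℝ} (ha : 0 < a) (hb : 0 < b) (u : ℝ) :
    a ^ 2 ≤ (1 + 4 * a * b) * max u ((b * u - a) ^ 2) := by
  rcases le_or_gt (a ^ 2) ((1 + 4 * a * b) * u) with h | h
  · exact h.trans (by gcongr; exact le_max_left _ _)
  · refine le_trans ?_ (mul_le_mul_of_nonneg_left (le_max_right _ _) (by positivity))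
    -- `a - b u > a (1 + 3ab) / (1 + 4ab)` and `(1 + 3ab)² ≥ 1 + 4ab`
    have hbu : b * u * (1 + 4 * a * b) < a * (a * b) := by nlinarith
    nlinarith [mul_pos ha hb, mul_pos (mul_pos ha hb) ha]

noncomputable def sqrtDiff (a b u : ℝ) : ℝ := √u * b - a / √u

theorem sqrtDiff_sq {a b u : ℝ} (hu : 0 < u) : sqrtDiff a b u ^ 2 = (b * u - a) ^ 2 / u := by
  obtain ⟨s, hs, rfl⟩ : ∃ s, 0 < s ∧ u = s ^ 2 :=
    ⟨√u, Real.sqrt_pos.mpr hu, (Real.sq_sqrt hu.le).symm⟩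
  rw [sqrtDiff, Real.sqrt_sq hs.le]
  field_simp

theorem hasDerivAt_sqrtDiff (a b : ℝ) {u : ℝ} (hu : 0 < u) :
    HasDerivAt (sqrtDiff a b) ((b * u + a) / (2 * u * √u)) u := by
  have hs := Real.sqrt_pos.mpr hu
  have h : HasDerivAt (sqrtDiff a b) _ u := ((Real.hasDerivAt_sqrt hu.ne').mul_const b).sub
    ((hasDerivAt_const u a).div (Real.hasDerivAt_sqrt hu.ne') hs.ne')
  convert h using 1
  field_simp
  rw [Real.sq_sqrt hu.le]
  ring

theorem strictMonoOn_sqrtDiff {a b : ℝ} (ha : 0 < a) (hb : 0 ≤ b) :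
    StrictMonoOn (sqrtDiff a b) (Ioi 0) := by
  intro u hu v _ huv
  have hsu : 0 < √u := Real.sqrt_pos.mpr hu
  have hsuv : √u < √v := Real.sqrt_lt_sqrt (le_of_lt hu) huv
  have : a / √v < a / √u := div_lt_div_of_pos_left ha hsu hsuv
  unfold sqrtDiff
  nlinarith

theorem sqrtDiff_image_Ioi {a b : ℝ} (ha : 0 < a) (hb : 0 < b) :
    sqrtDiff a b '' Ioi 0 = univ := by
  refine eq_univ_of_forall fun t => ?_
  set s := √(t ^ 2 + 4 * a * b)
  have hs2 : s ^ 2 = t ^ 2 + 4 * a * b := Real.sq_sqrt (by positivity)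
  have hts : 0 < t + s := by
    have : |t| < s := by
      rw [← Real.sqrt_sq_eq_abs]
      exact Real.sqrt_lt_sqrt (sq_nonneg t) (by nlinarith)
    linarith [neg_abs_le t]
  have hq : 0 < (t + s) / (2 * b) := by positivity
  refine ⟨((t + s) / (2 * b)) ^ 2, pow_pos hq 2, ?_⟩
  rw [sqrtDiff, Real.sqrt_sq hq.le]
  field_simp
  nlinarith

theorem rpow_neg_le_mul_deriv_mul_max {a b β u : ℝ} (ha : 0 < a) (hb : 0 < b)
    (hβ : 3 / 2 ≤ β) (hu : 0 < u) :
    u ^ (-β) ≤ 2 * (1 + 4 * a * b) ^ (β - 3 / 2) / a ^ (2 * (β - 1)) *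
      ((b * u + a) / (2 * u * √u)) * max 1 (sqrtDiff a b u ^ 2) ^ (β - 3 / 2) := by
  set γ := β - 3 / 2
  set M := max 1 (sqrtDiff a b u ^ 2)
  have hs : 0 < √u := Real.sqrt_pos.mpr hu
  have hM : a ^ 2 / u ≤ (1 + 4 * a * b) * M := by
    have h := sq_le_one_add_mul_mul_max ha hb u
    rw [div_le_iff₀ hu, mul_assoc, mul_comm M, mul_max_of_nonneg _ _ hu.le, mul_one,
      sqrtDiff_sq hu, mul_div_cancel₀ _ hu.ne']
    exact h
  have ha2 : (a ^ 2) ^ γ = a ^ (2 * γ) := by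
    rw [← Real.rpow_natCast, ← Real.rpow_mul ha.le, Nat.cast_ofNat]
  calc u ^ (-β) = (a ^ 2 / u) ^ γ / a ^ (2 * γ) * (u * √u)⁻¹ := by
        rw [Real.div_rpow (by positivity) hu.le, ha2, div_div_cancel_left' (by positivity),
          Real.sqrt_eq_rpow, ← Real.rpow_one_add' hu.le (by norm_num), ← Real.rpow_neg hu.le,
          ← Real.rpow_neg hu.le, ← Real.rpow_add hu]
        ring_nf
        congr 1
        ring
    _ ≤ ((1 + 4 * a * b) * M) ^ γ / a ^ (2 * γ) * ((b * u + a) / (a * (u * √u))) := by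
        gcongr
        rw [inv_eq_one_div, div_le_div_iff₀ (by positivity) (by positivity)]
        nlinarith [mul_pos hu hs, mul_pos hb hu]
    _ = _ := by
        rw [Real.mul_rpow (by positivity) (by positivity),
          show 2 * (β - 1) = 2 * γ + 1 by ring, Real.rpow_add ha, Real.rpow_one]
        field_simp

theorem integral_rpow_neg_mul_exp_sqrtDiff_le {a b c β : ℝ} (ha : 0 < a) (hb : 0 < b)
    (hc : 0 < c) (hβ : 3 / 2 ≤ β) :
    ∫ u in Ioi 0, u ^ (-β) * exp (-c * sqrtDiff a b u ^ 2) ≤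
      2 * (1 + 4 * a * b) ^ (β - 3 / 2) / a ^ (2 * (β - 1)) *
        ∫ t, max 1 (t ^ 2) ^ (β - 3 / 2) * exp (-c * t ^ 2) := by
  set g : ℝ → ℝ := fun t => max 1 (t ^ 2) ^ (β - 3 / 2) * exp (-c * t ^ 2)
  set K := 2 * (1 + 4 * a * b) ^ (β - 3 / 2) / a ^ (2 * (β - 1))
  have hderiv : ∀ u ∈ Ioi (0 : ℝ),
      HasDerivWithinAt (sqrtDiff a b) ((b * u + a) / (2 * u * √u)) (Ioi 0) u :=
    fun u hu => (hasDerivAt_sqrtDiff a b hu).hasDerivWithinAt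
  have hinj := (strictMonoOn_sqrtDiff ha hb.le).injOn
  have hsubst :
      ∫ u in Ioi 0, |(b * u + a) / (2 * u * √u)| • g (sqrtDiff a b u) = ∫ t, g t := by
    rw [← integral_image_eq_integral_abs_deriv_smul measurableSet_Ioi hderiv hinj,
      sqrtDiff_image_Ioi ha hb, setIntegral_univ]
  have hint :
      IntegrableOn (fun u => |(b * u + a) / (2 * u * √u)| • g (sqrtDiff a b u)) (Ioi 0) := by
    rw [← integrableOn_image_iff_integrableOn_abs_deriv_smul measurableSet_Ioi hderiv hinj,
      sqrtDiff_image_Ioi ha hb, integrableOn_univ]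
    exact integrable_max_one_sq_rpow_mul_exp_neg_mul_sq hc (by linarith)
  calc ∫ u in Ioi 0, u ^ (-β) * exp (-c * sqrtDiff a b u ^ 2)
      ≤ ∫ u in Ioi 0, K * (|(b * u + a) / (2 * u * √u)| • g (sqrtDiff a b u)) := by
        refine integral_mono_of_nonneg (ae_restrict_of_forall_mem measurableSet_Ioi
          fun u (hu : 0 < u) => by dsimp only [Pi.zero_apply]; positivity) (hint.const_mul K)
          (ae_restrict_of_forall_mem measurableSet_Ioi fun u (hu : 0 < u) => ?_)
        have hs : 0 < √u := Real.sqrt_pos.mpr hu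
        dsimp only
        rw [smul_eq_mul, abs_of_pos (by positivity), ← mul_assoc, ← mul_assoc]
        exact mul_le_mul_of_nonneg_right (rpow_neg_le_mul_deriv_mul_max ha hb hβ hu)
          (exp_pos _).le
    _ = K * ∫ t, g t := by rw [integral_const_mul, hsubst]

theorem stmt5 (c β : ℝ) (hc : 0 < c) (hβ : 3/2 ≤ β) :
    (∀ a b : ℝ, 0 < a → 0 < b →
      (∫ u in Set.Ioi (0:ℝ),
          u ^ (-β) * Real.exp (-c * (Real.sqrt u * b - a / Real.sqrt u)^2)) ≤
        (2 * ∫ r in Set.Ioi (0:ℝ),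
            (max 1 r) ^ (β - 3/2) * r ^ (-(1:ℝ)/2) * Real.exp (-c * r)) *
          (1 + 4*a*b) ^ (β - 3/2) / a ^ (2*(β-1))) ∧
    (β = 3/2 → ∀ a b : ℝ, 0 < a → 0 < b →
      (∫ u in Set.Ioi (0:ℝ),
          u ^ (-β) * Real.exp (-c * (Real.sqrt u * b - a / Real.sqrt u)^2)) ≤
        Real.sqrt (4 * Real.pi / c) * (1 + 4*a*b) ^ (β - 3/2) / a ^ (2*(β-1))) := by
  refine ⟨fun a b ha hb => ?_, fun hβ' a b ha hb => ?_⟩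
  · rw [integral_Ioi_max_one_rpow_mul_rpow_mul_exp_eq]
    exact (integral_rpow_neg_mul_exp_sqrtDiff_le ha hb hc hβ).trans_eq (by ring)
  · have hgauss : ∫ t, max 1 (t ^ 2) ^ (β - 3 / 2) * exp (-c * t ^ 2) = √(π / c) := by
      simp only [hβ', sub_self, Real.rpow_zero, one_mul, integral_gaussian]
    have h4 : √(4 * π / c) = 2 * √(π / c) := by
      rw [mul_div_assoc, Real.sqrt_mul zero_le_four, show (4 : ℝ) = 2 ^ 2 by norm_num,
        Real.sqrt_sq zero_le_two]
    rw [h4, ← hgauss]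
    exact (integral_rpow_neg_mul_exp_sqrtDiff_le ha hb hc hβ).trans_eq (by ring)
end

section
/- Let d ≥ 3 be an integer and β > 0, and let 1 denote a fixed unit vector in ℝ^d. Then ∫_{|w| > 1} e^{-(|w| - w·1)} |w|^{-β} dw < ∞ if and only if β > (d+1)/2. -/
/-!
Write `w = x e + u` with `u ⟂ e`, so that `‖w‖ - ⟪w, e⟫ = ‖u‖² / (‖w‖ + x)`. Where `x ≤ ‖w‖ / 2`
the integrand is at most `exp (-‖w‖ / 2)`, which is integrable. Where `x > ‖w‖ / 2` it is at most
`x ^ (-β) * exp (-‖u‖² / (3 x))`, and where `x > 1`, `‖u‖² ≤ x` it is at least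
`exp (-1) * (2 x) ^ (-β)`. Integrating over `u` first (a Gaussian of width `√x`, resp. a ball of
radius `√x`, in the `d - 1` directions orthogonal to `e`), both bounds become multiples of
`x ^ (-β + (d - 1) / 2)`, whose integral over `x > 1` is finite iff `β > (d + 1) / 2`.
-/

open MeasureTheory Real RealInnerProductSpace Module Set

lemma exp_neg_div_le_mul_one_add_rpow_neg {a t : ℝ} (ha : 1 ≤ a) (ht : 0 ≤ t) (n : ℕ) :
    exp (-(t / a)) ≤ (a * n) ^ n * (1 + t) ^ (-(n : ℝ)) := by
  rw [rpow_neg (by positivity), rpow_natCast, ← div_eq_mul_inv, le_div_iff₀ (by positivity)]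
  rcases n.eq_zero_or_pos with rfl | hn
  · simpa using neg_nonpos.mpr (by positivity : 0 ≤ t / a)
  have han : 1 ≤ a * n := one_le_mul_of_one_le_of_one_le ha (Nat.one_le_cast.mpr hn)
  have hbase : 1 + t ≤ a * n * (t / (a * n) + 1) := by
    rw [mul_add, mul_div_cancel₀ _ (by positivity), mul_one]
    linarith
  have hexp : (n : ℝ) * (t / (a * n)) = t / a := by field_simp
  calc exp (-(t / a)) * (1 + t) ^ n
      ≤ exp (-(t / a)) * ((a * n) ^ n * exp (t / (a * n)) ^ n) := by
        rw [← mul_pow]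
        gcongr
        exact hbase.trans (mul_le_mul_of_nonneg_left (add_one_le_exp _) (by positivity))
    _ = (a * n) ^ n := by
        rw [← exp_nat_mul, hexp, mul_left_comm, ← exp_add, neg_add_cancel, exp_zero, mul_one]

lemma exp_neg_sub_mul_rpow_le_of_le_half {x r β : ℝ} (hr : 1 ≤ r) (hβ : 0 ≤ β) (hx : x ≤ r / 2) :
    exp (-(r - x)) * r ^ (-β) ≤ exp (-(r / 2)) :=
  calc exp (-(r - x)) * r ^ (-β) ≤ exp (-(r / 2)) * 1 :=
        mul_le_mul (exp_le_exp.mpr (by linarith))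
          (rpow_le_one_of_one_le_of_nonpos hr (by linarith)) (by positivity) (exp_pos _).le
    _ = exp (-(r / 2)) := mul_one _

lemma exp_neg_sub_mul_rpow_le_of_half_lt {x y r β : ℝ} (hr : r ^ 2 = x ^ 2 + y ^ 2) (hr0 : 0 ≤ r)
    (hβ : 0 ≤ β) (hx : r / 2 < x) :
    exp (-(r - x)) * r ^ (-β) ≤ x ^ (-β) * exp (-(3 * x)⁻¹ * y ^ 2) := by
  have hx0 : 0 < x := by linarith
  have hxr : x ≤ r := (abs_le_of_sq_le_sq' (by nlinarith) hr0).2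
  have hgap : (3 * x)⁻¹ * y ^ 2 ≤ r - x := by
    rw [inv_mul_le_iff₀ (by positivity)]
    nlinarith
  rw [mul_comm]
  exact mul_le_mul (rpow_le_rpow_of_nonpos hx0 hxr (by linarith))
    (exp_le_exp.mpr (by linarith)) (exp_pos _).le (rpow_nonneg hx0.le _)

lemma le_exp_neg_sub_mul_rpow {x y r β : ℝ} (hr : r ^ 2 = x ^ 2 + y ^ 2) (hr0 : 0 ≤ r)
    (hβ : 0 ≤ β) (hx : 1 < x) (hy : y ^ 2 ≤ x) :
    1 < r ∧ exp (-1) * (2 * x) ^ (-β) ≤ exp (-(r - x)) * r ^ (-β) := by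
  have hxr : x ≤ r := (abs_le_of_sq_le_sq' (by nlinarith) hr0).2
  have hr1 : r ≤ x + 1 := (abs_le_of_sq_le_sq' (by nlinarith) (by linarith)).2
  refine ⟨by linarith, ?_⟩
  exact mul_le_mul (exp_le_exp.mpr (by linarith))
    (rpow_le_rpow_of_nonpos (by linarith) (by linarith) (by linarith)) (by positivity)
    (exp_pos _).le

lemma lintegral_Ioi_rpow_lt_top_iff {a s : ℝ} (ha : 0 < a) :
    ∫⁻ x in Ioi a, ENNReal.ofReal (x ^ s) < ⊤ ↔ s < -1 := by
  rw [lt_top_iff_ne_top, lintegral_ofReal_ne_top_iff_integrable (f := fun x => x ^ s)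
    (measurable_id.pow_const s).aestronglyMeasurable, ← IntegrableOn, integrableOn_Ioi_rpow_iff ha]
  exact (ae_restrict_iff' measurableSet_Ioi).mpr
    (ae_of_all _ fun x hx => rpow_nonneg (ha.trans hx).le s)

lemma lintegral_prod_indicator_fst_mul {Y : Type*} [MeasureSpace Y] [SFinite (volume : Measure Y)]
    {s : Set ℝ} (hs : MeasurableSet s) {g : ℝ → ENNReal} {h : ℝ × Y → ENNReal}
    (hg : Measurable g) (hh : Measurable h) :
    ∫⁻ p : ℝ × Y, s.indicator g p.1 * h p = ∫⁻ x in s, g x * ∫⁻ y, h (x, y) := by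
  have hmeas : Measurable fun p : ℝ × Y => s.indicator g p.1 * h p :=
    ((hg.indicator hs).comp measurable_fst).mul hh
  rw [Measure.volume_eq_prod, lintegral_prod _ hmeas.aemeasurable, ← lintegral_indicator hs]
  congr 1 with x
  by_cases hx : x ∈ s
  · simp only [indicator_of_mem hx]
    exact lintegral_const_mul _ (hh.comp measurable_prodMk_left)
  · simp [hx]

/- `WithLp 2 (ℝ × F)` carries the Euclidean norm `√(x² + ‖u‖²)`; `ofLp` identifies its volume with
the product measure on `ℝ × F` (whose norm is the sup norm), where Fubini applies. -/

section

variable {F : Type*} [SeminormedAddCommGroup F]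

lemma WithLp.norm_sq_eq_fst_sq_add_norm_snd_sq (w : WithLp 2 (ℝ × F)) :
    ‖w‖ ^ 2 = w.fst ^ 2 + ‖w.snd‖ ^ 2 := by
  rw [WithLp.prod_norm_sq_eq_of_L2, Real.norm_eq_abs, sq_abs]

lemma ofReal_exp_neg_norm_sub_fst_mul_rpow_le {β : ℝ} (hβ : 0 ≤ β) (k : ℕ)
    {w : WithLp 2 (ℝ × F)} (hw : 1 < ‖w‖) :
    ENNReal.ofReal (exp (-(‖w‖ - w.fst)) * ‖w‖ ^ (-β)) ≤
      ENNReal.ofReal ((2 * k) ^ k * (1 + ‖w.ofLp‖) ^ (-(k : ℝ))) +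
        (Ioi 2⁻¹).indicator (fun x => ENNReal.ofReal (x ^ (-β))) w.fst *
          ENNReal.ofReal (exp (-(3 * w.fst)⁻¹ * ‖w.snd‖ ^ 2)) := by
  rcases le_or_gt w.fst (‖w‖ / 2) with hx | hx
  · refine le_add_right (ENNReal.ofReal_le_ofReal ?_)
    have hofLp : ‖w.ofLp‖ ≤ ‖w‖ :=
      norm_prod_le_iff.mpr ⟨WithLp.norm_fst_le ℝ w, WithLp.norm_snd_le ℝ w⟩
    calc exp (-(‖w‖ - w.fst)) * ‖w‖ ^ (-β) ≤ exp (-(‖w‖ / 2)) :=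
          exp_neg_sub_mul_rpow_le_of_le_half hw.le hβ hx
      _ ≤ (2 * k) ^ k * (1 + ‖w‖) ^ (-(k : ℝ)) :=
          exp_neg_div_le_mul_one_add_rpow_neg one_le_two (norm_nonneg _) k
      _ ≤ (2 * k) ^ k * (1 + ‖w.ofLp‖) ^ (-(k : ℝ)) := mul_le_mul_of_nonneg_left
          (rpow_le_rpow_of_nonpos (by positivity) (by linarith) (by simp)) (by positivity)
  · have hx' : w.fst ∈ Ioi 2⁻¹ := by rw [mem_Ioi]; linarith
    refine le_add_left ?_
    rw [indicator_of_mem hx', ← ENNReal.ofReal_mul (rpow_nonneg (le_of_lt (by linarith)) _)]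
    exact ENNReal.ofReal_le_ofReal (exp_neg_sub_mul_rpow_le_of_half_lt
      (WithLp.norm_sq_eq_fst_sq_add_norm_snd_sq w) (norm_nonneg _) hβ hx)

lemma mul_indicator_le_indicator_exp_neg_norm_sub_fst_mul_rpow {β : ℝ} (hβ : 0 ≤ β)
    (w : WithLp 2 (ℝ × F)) :
    ENNReal.ofReal (exp (-1) * 2 ^ (-β)) * ((Ioi 1).indicator (fun x => ENNReal.ofReal (x ^ (-β)))
        w.fst * {p : ℝ × F | ‖p.2‖ ≤ √p.1}.indicator 1 w.ofLp) ≤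
      {w : WithLp 2 (ℝ × F) | 1 < ‖w‖}.indicator
        (fun w => ENNReal.ofReal (exp (-(‖w‖ - w.fst)) * ‖w‖ ^ (-β))) w := by
  by_cases hw : 1 < w.fst ∧ ‖w.snd‖ ≤ √w.fst
  · obtain ⟨hr1, hbound⟩ := le_exp_neg_sub_mul_rpow (WithLp.norm_sq_eq_fst_sq_add_norm_snd_sq w)
      (norm_nonneg _) hβ hw.1 ((le_sqrt (norm_nonneg _) (by linarith)).mp hw.2)
    rw [indicator_of_mem (show w ∈ {w : WithLp 2 (ℝ × F) | 1 < ‖w‖} from hr1),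
      indicator_of_mem (show w.fst ∈ Ioi 1 from hw.1),
      indicator_of_mem (show w.ofLp ∈ {p : ℝ × F | ‖p.2‖ ≤ √p.1} from hw.2), Pi.one_apply,
      mul_one, ← ENNReal.ofReal_mul (by positivity)]
    refine ENNReal.ofReal_le_ofReal ?_
    rwa [mul_rpow zero_le_two (by linarith), ← mul_assoc] at hbound
  · rcases not_and_or.mp hw with h | h
    · simp [indicator_of_notMem (show w.fst ∉ Ioi 1 from h)]
    · simp [indicator_of_notMem (show w.ofLp ∉ {p : ℝ × F | ‖p.2‖ ≤ √p.1} from h)]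

end

section

variable {F : Type*} [NormedAddCommGroup F] [InnerProductSpace ℝ F] [FiniteDimensional ℝ F]
  [MeasurableSpace F] [BorelSpace F]

lemma lintegral_exp_neg_mul_sq_norm {b : ℝ} (hb : 0 < b) :
    ∫⁻ v : F, ENNReal.ofReal (exp (-b * ‖v‖ ^ 2)) =
      ENNReal.ofReal ((π / b) ^ (finrank ℝ F / 2 : ℝ)) := by
  have hint : Integrable fun v : F => exp (-b * ‖v‖ ^ 2) := by
    refine (GaussianFourier.integrable_cexp_neg_mul_sq_norm_add (V := F)
      (b := b) (by simpa using hb) 0 0).norm.congr (ae_of_all _ fun v => ?_)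
    simp [Complex.norm_exp, ← Complex.ofReal_pow]
  rw [← ofReal_integral_eq_lintegral_ofReal hint (ae_of_all _ fun v => (exp_pos _).le),
    GaussianFourier.integral_rexp_neg_mul_sq_norm hb]

lemma lintegral_indicator_rpow_mul_exp_neg_sq_norm {a c s : ℝ} (ha : 0 ≤ a) (hc : 0 < c) :
    ∫⁻ p : ℝ × F, (Ioi a).indicator (fun x => ENNReal.ofReal (x ^ s)) p.1 *
        ENNReal.ofReal (exp (-(c * p.1)⁻¹ * ‖p.2‖ ^ 2)) =
      ENNReal.ofReal ((c * π) ^ (finrank ℝ F / 2 : ℝ)) *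
        ∫⁻ x in Ioi a, ENNReal.ofReal (x ^ (s + finrank ℝ F / 2)) := by
  rw [lintegral_prod_indicator_fst_mul measurableSet_Ioi (by fun_prop) (by fun_prop),
    ← lintegral_const_mul' _ _ ENNReal.ofReal_ne_top]
  refine setLIntegral_congr_fun measurableSet_Ioi fun x hx => ?_
  have hx0 : 0 < x := ha.trans_lt hx
  dsimp only
  rw [lintegral_exp_neg_mul_sq_norm (by positivity), ← ENNReal.ofReal_mul (by positivity),
    ← ENNReal.ofReal_mul (by positivity), div_inv_eq_mul, ← mul_assoc, mul_comm π c,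
    mul_rpow (by positivity) hx0.le, rpow_add hx0]
  ring_nf

lemma lintegral_indicator_rpow_mul_indicator_closedBall {a s : ℝ} (ha : 0 ≤ a) :
    ∫⁻ p : ℝ × F, (Ioi a).indicator (fun x => ENNReal.ofReal (x ^ s)) p.1 *
        {p : ℝ × F | ‖p.2‖ ≤ √p.1}.indicator (1 : ℝ × F → ENNReal) p =
      volume (Metric.ball (0 : F) 1) *
        ∫⁻ x in Ioi a, ENNReal.ofReal (x ^ (s + finrank ℝ F / 2)) := by
  have hmeas : MeasurableSet {p : ℝ × F | ‖p.2‖ ≤ √p.1} :=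
    measurableSet_le (by fun_prop) (by fun_prop)
  rw [lintegral_prod_indicator_fst_mul measurableSet_Ioi (by fun_prop)
    ((measurable_one : Measurable (1 : ℝ × F → ENNReal)).indicator hmeas),
    ← lintegral_const_mul' _ _ measure_ball_lt_top.ne]
  refine setLIntegral_congr_fun measurableSet_Ioi fun x hx => ?_
  have hx0 : 0 < x := ha.trans_lt hx
  have hslice : (fun u : F => {p : ℝ × F | ‖p.2‖ ≤ √p.1}.indicator (1 : ℝ × F → ENNReal) (x, u)) =
      (Metric.closedBall (0 : F) √x).indicator 1 := by
    ext u; by_cases hu : ‖u‖ ≤ √x <;> simp [hu]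
  rw [hslice, lintegral_indicator_one Metric.isClosed_closedBall.measurableSet,
    Measure.addHaar_closedBall _ _ (sqrt_nonneg x), ← mul_assoc,
    ← ENNReal.ofReal_mul (by positivity), mul_comm]
  congr 2
  rw [sqrt_eq_rpow, ← rpow_mul_natCast hx0.le, rpow_add hx0]
  ring_nf

lemma setLIntegral_exp_neg_norm_sub_fst_mul_rpow_lt_top {β : ℝ}
    (hβ : (finrank ℝ F : ℝ) / 2 + 1 < β) :
    ∫⁻ w : WithLp 2 (ℝ × F) in {w | 1 < ‖w‖},
      ENNReal.ofReal (exp (-(‖w‖ - w.fst)) * ‖w‖ ^ (-β)) < ⊤ := by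
  set k := finrank ℝ F + 2
  set M : ℝ × F → ENNReal := fun p => ENNReal.ofReal ((2 * k) ^ k * (1 + ‖p‖) ^ (-(k : ℝ)))
  set B : ℝ × F → ENNReal := fun p =>
    (Ioi 2⁻¹).indicator (fun x => ENNReal.ofReal (x ^ (-β))) p.1 *
      ENNReal.ofReal (exp (-(3 * p.1)⁻¹ * ‖p.2‖ ^ 2))
  have hM : Measurable M := by fun_prop
  have hB : Measurable B :=
    (((measurable_id.pow_const _).ennreal_ofReal.indicator measurableSet_Ioi).comp
      measurable_fst).mul (by fun_prop)
  have hM_fin : ∫⁻ p, M p < ⊤ := by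
    have : (volume : Measure (ℝ × F)).IsAddHaarMeasure := by
      rw [Measure.volume_eq_prod]; infer_instance
    have hdim : (finrank ℝ (ℝ × F) : ℝ) < k := by
      rw [Module.finrank_prod, Module.finrank_self]; simp only [k]; push_cast; linarith
    simp only [M, ENNReal.ofReal_mul (by positivity : (0 : ℝ) ≤ (2 * k) ^ k)]
    rw [lintegral_const_mul' _ _ ENNReal.ofReal_ne_top]
    exact ENNReal.mul_lt_top ENNReal.ofReal_lt_top (finite_integral_one_add_norm hdim)
  have hB_fin : ∫⁻ p, B p < ⊤ := by
    rw [lintegral_indicator_rpow_mul_exp_neg_sq_norm (by norm_num) (by norm_num : (0 : ℝ) < 3)]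
    exact ENNReal.mul_lt_top ENNReal.ofReal_lt_top
      ((lintegral_Ioi_rpow_lt_top_iff (by norm_num)).mpr (by linarith))
  have hβ0 : 0 ≤ β := by linarith [(finrank ℝ F).cast_nonneg (α := ℝ)]
  calc _ ≤ ∫⁻ w in {w : WithLp 2 (ℝ × F) | 1 < ‖w‖}, M w.ofLp + B w.ofLp :=
        setLIntegral_mono (by fun_prop) fun w hw =>
          ofReal_exp_neg_norm_sub_fst_mul_rpow_le hβ0 k hw
    _ ≤ ∫⁻ w : WithLp 2 (ℝ × F), M w.ofLp + B w.ofLp := setLIntegral_le_lintegral _ _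
    _ = ∫⁻ p, M p + B p :=
        (WithLp.volume_preserving_ofLp ℝ F).lintegral_comp (f := fun p => M p + B p) (hM.add hB)
    _ < ⊤ := by rw [lintegral_add_left hM]; exact ENNReal.add_lt_top.mpr ⟨hM_fin, hB_fin⟩

lemma setLIntegral_exp_neg_norm_sub_fst_mul_rpow_eq_top {β : ℝ} (hβ0 : 0 ≤ β)
    (hβ : β ≤ (finrank ℝ F : ℝ) / 2 + 1) :
    ∫⁻ w : WithLp 2 (ℝ × F) in {w | 1 < ‖w‖},
      ENNReal.ofReal (exp (-(‖w‖ - w.fst)) * ‖w‖ ^ (-β)) = ⊤ := by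
  set S := {p : ℝ × F | ‖p.2‖ ≤ √p.1}
  set L : ℝ × F → ENNReal := fun p => ENNReal.ofReal (exp (-1) * 2 ^ (-β)) *
    ((Ioi 1).indicator (fun x => ENNReal.ofReal (x ^ (-β))) p.1 * S.indicator 1 p)
  have hL : Measurable L := measurable_const.mul <|
    (((measurable_id.pow_const _).ennreal_ofReal.indicator measurableSet_Ioi).comp
      measurable_fst).mul ((measurable_one : Measurable (1 : ℝ × F → ENNReal)).indicator
        (measurableSet_le (by fun_prop) (by fun_prop)))
  have hL_top : ∫⁻ p, L p = ⊤ := by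
    have hdiv : ∫⁻ x in Ioi 1, ENNReal.ofReal (x ^ (-β + finrank ℝ F / 2)) = ⊤ :=
      not_lt_top_iff.mp fun h => by linarith [(lintegral_Ioi_rpow_lt_top_iff one_pos).mp h]
    rw [lintegral_const_mul' _ _ ENNReal.ofReal_ne_top,
      lintegral_indicator_rpow_mul_indicator_closedBall zero_le_one, hdiv,
      ENNReal.mul_top (Metric.measure_ball_pos _ _ one_pos).ne', ENNReal.mul_top (by positivity)]
  refine top_unique ?_
  calc ⊤ = ∫⁻ p, L p := hL_top.symm
    _ = ∫⁻ w : WithLp 2 (ℝ × F), L w.ofLp :=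
        ((WithLp.volume_preserving_ofLp ℝ F).lintegral_comp hL).symm
    _ ≤ _ := lintegral_mono (mul_indicator_le_indicator_exp_neg_norm_sub_fst_mul_rpow hβ0)
    _ = _ := lintegral_indicator (measurableSet_lt measurable_const measurable_norm) _

theorem setLIntegral_exp_neg_norm_sub_fst_mul_rpow_lt_top_iff {β : ℝ} (hβ : 0 < β) :
    ∫⁻ w : WithLp 2 (ℝ × F) in {w | 1 < ‖w‖},
      ENNReal.ofReal (exp (-(‖w‖ - w.fst)) * ‖w‖ ^ (-β)) < ⊤ ↔
      (finrank ℝ F : ℝ) / 2 + 1 < β := by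
  refine ⟨fun h => ?_, setLIntegral_exp_neg_norm_sub_fst_mul_rpow_lt_top⟩
  by_contra hle
  rw [setLIntegral_exp_neg_norm_sub_fst_mul_rpow_eq_top hβ.le (not_lt.mp hle)] at h
  exact lt_irrefl _ h

end

section

variable {E : Type*} [NormedAddCommGroup E] [InnerProductSpace ℝ E]

/-- `(x, u) ↦ x • e + u` -/
noncomputable def prodOrthogonalSpanSingleton (e : E) (he : ‖e‖ = 1) :
    WithLp 2 (ℝ × (ℝ ∙ e)ᗮ) ≃ₗᵢ[ℝ] E :=
  (LinearIsometryEquiv.withLpProdCongr 2 (LinearIsometryEquiv.toSpanUnitSingleton e he)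
    (LinearIsometryEquiv.refl ℝ _)).trans (ℝ ∙ e).orthogonalDecomposition.symm

lemma inner_prodOrthogonalSpanSingleton_apply (e : E) (he : ‖e‖ = 1) (w : WithLp 2 (ℝ × (ℝ ∙ e)ᗮ)) :
    ⟪prodOrthogonalSpanSingleton e he w, e⟫ = w.fst := by
  have hw : prodOrthogonalSpanSingleton e he w = w.fst • e + w.snd := by
    simp [prodOrthogonalSpanSingleton, LinearIsometryEquiv.toSpanUnitSingleton]
  rw [hw, inner_add_left, real_inner_smul_left, real_inner_self_eq_norm_sq, he,
    Submodule.mem_orthogonal_singleton_iff_inner_left.mp w.snd.2]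
  ring

theorem setLIntegral_exp_neg_norm_sub_inner_mul_rpow_lt_top_iff [FiniteDimensional ℝ E]
    [MeasurableSpace E] [BorelSpace E] {e : E} (he : ‖e‖ = 1) {β : ℝ}
    (hβ : 0 < β) :
    ∫⁻ w in {w : E | 1 < ‖w‖}, ENNReal.ofReal (exp (-(‖w‖ - ⟪w, e⟫)) * ‖w‖ ^ (-β)) < ⊤ ↔
      ((finrank ℝ E : ℝ) + 1) / 2 < β := by
  set Φ := prodOrthogonalSpanSingleton e he
  have hdim : (finrank ℝ (ℝ ∙ e)ᗮ : ℝ) + 1 = finrank ℝ E := by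
    rw [← (ℝ ∙ e).finrank_add_finrank_orthogonal,
      finrank_span_singleton (norm_ne_zero_iff.mp (by simp [he]))]
    push_cast; ring
  rw [← Φ.measurePreserving.setLIntegral_comp_preimage_emb Φ.toMeasurableEquiv.measurableEmbedding]
  simp only [preimage_ofPred_eq, LinearIsometryEquiv.norm_map, Φ,
    inner_prodOrthogonalSpanSingleton_apply]
  rw [setLIntegral_exp_neg_norm_sub_fst_mul_rpow_lt_top_iff hβ, ← hdim]
  constructor <;> intro h <;> linarith

end

theorem stmt6_general (d : ℕ) (β : ℝ) (hβ : 0 < β)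
    (e : EuclideanSpace ℝ (Fin d)) (he : ‖e‖ = 1) :
    (∫⁻ w in {w : EuclideanSpace ℝ (Fin d) | 1 < ‖w‖},
        ENNReal.ofReal (Real.exp (-(‖w‖ - ⟪w, e⟫)) * ‖w‖ ^ (-β))) < ⊤ ↔
      ((d : ℝ) + 1) / 2 < β := by
  simpa only [finrank_euclideanSpace_fin] using
    setLIntegral_exp_neg_norm_sub_inner_mul_rpow_lt_top_iff he hβ

theorem stmt6 (d : ℕ) (hd : 3 ≤ d) (β : ℝ) (hβ : 0 < β)
    (e : EuclideanSpace ℝ (Fin d)) (he : ‖e‖ = 1) :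
    (∫⁻ w in {w : EuclideanSpace ℝ (Fin d) | 1 < ‖w‖},
        ENNReal.ofReal (Real.exp (-(‖w‖ - ⟪w, e⟫)) * ‖w‖ ^ (-β))) < ⊤ ↔
      ((d : ℝ) + 1) / 2 < β :=
  stmt6_general d β hβ e he
end

section
/- Let d ≥ 3. Define J(x,y) = ∫₀^∞ τ^{-d/2} exp(-|x - τy|²/(4τ)) dτ for x, y ∈ ℝ^d with x ≠ 0, and K₀(x,y) = e^{-(|x||y| - x·y)/2} (1 + |x||y|)^{(d-3)/2} / |x|^{d-2}. Then there exist constants c₁, c₂ > 0 depending only on d such that c₁ K₀(x,y) ≤ J(x,y) ≤ c₂ K₀(x,y) for all x ≠ 0 and all y ∈ ℝ^d. -/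
/-!
Put `a = ‖x‖` and `r = ‖x‖‖y‖`. The substitution `τ = a²σ` and the identity
`‖x - a²σ y‖² / (4a²σ) = (1 - rσ)² / (4σ) + (r - ⟪x, y⟫) / 2` turn the integral into
`e^{-(r - ⟪x, y⟫)/2} a^{2-d} F(r)` with `F(r) = ∫₀^∞ σ^{-d/2} e^{-(1 - rσ)²/(4σ)} dσ`, so it remains
to show `F(r) ≍ (1 + r)^{(d-3)/2}`.

With `q = (1 + r)^{-1/2}`, the integrand of `F` is at least `e^{-1/4} (2q²)^{-d/2}` on the interval
`[q², q² + q³]`, which gives the lower bound. For the upper bound: where `|1 - rσ| ≥ 1/2` the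
integrand is at most `σ^{-d/2} e^{-1/(16σ)}`, integrable since `d > 2`; where `|1 - rσ| < 1/2` it is
at most the Gaussian `(2r)^{d/2} e^{-r³(σ - 1/r)²/8}`, of integral `2^{d/2} √(8π) r^{(d-3)/2}`.
-/

open MeasureTheory Real RealInnerProductSpace

open Set

theorem integrableOn_rpow_neg_mul_exp_neg_div {p c : ℝ} (hp : 1 < p) (hc : 0 < c) :
    IntegrableOn (fun σ : ℝ => σ ^ (-p) * exp (-(c / σ))) (Ioi 0) := by
  -- `σ = 1/u` turns it into the Γ-integrand `u ^ (p - 2) * exp (-c * u)`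
  have h := (integrableOn_Ioi_comp_rpow_iff' _ (by norm_num : (-1 : ℝ) ≠ 0)).2
    (integrableOn_rpow_mul_exp_neg_mul_rpow (s := p - 2) (by linarith) one_pos hc)
  refine h.congr_fun (fun σ (hσ : 0 < σ) => ?_) measurableSet_Ioi
  simp only [smul_eq_mul, rpow_one, rpow_neg_one]
  rw [← mul_assoc, inv_rpow hσ.le, ← rpow_neg hσ.le, ← rpow_add hσ]
  ring_nf

noncomputable def kernelProfile (p r : ℝ) : ℝ :=
  ∫ σ in Ioi (0:ℝ), σ ^ (-p) * exp (-(1 - r * σ) ^ 2 / (4 * σ))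

theorem neg_one_sub_mul_sq_div_eq {r σ : ℝ} (hσ : σ ≠ 0) :
    -(1 - r * σ) ^ 2 / (4 * σ) = r / 2 - 1 / (4 * σ) - r ^ 2 * σ / 4 := by
  field_simp
  ring

theorem integrableOn_kernelProfile_integrand {p : ℝ} (hp : 1 < p) (r : ℝ) :
    IntegrableOn (fun σ : ℝ => σ ^ (-p) * exp (-(1 - r * σ) ^ 2 / (4 * σ))) (Ioi 0) := by
  refine ((integrableOn_rpow_neg_mul_exp_neg_div hp (by norm_num : (0:ℝ) < 1 / 4)).const_mul
    (exp (r / 2))).mono' (by fun_prop) ?_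
  filter_upwards [ae_restrict_mem measurableSet_Ioi] with σ (hσ : 0 < σ)
  rw [norm_of_nonneg (by positivity), neg_one_sub_mul_sq_div_eq hσ.ne', ← mul_left_comm, ← exp_add]
  gcongr
  rw [div_div]
  linarith [show 0 ≤ r ^ 2 * σ / 4 by positivity]

theorem setIntegral_rpow_neg_mul_exp_neg_norm_sub_smul {E : Type*} [NormedAddCommGroup E]
    [InnerProductSpace ℝ E] (p : ℝ) {x : E} (hx : x ≠ 0) (y : E) :
    ∫ τ in Ioi (0:ℝ), τ ^ (-p) * exp (-‖x - τ • y‖ ^ 2 / (4 * τ)) =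
      exp (-(‖x‖ * ‖y‖ - ⟪x, y⟫) / 2) / ‖x‖ ^ (2 * p - 2) * kernelProfile p (‖x‖ * ‖y‖) := by
  have ha : 0 < ‖x‖ := norm_pos_iff.2 hx
  have ha2 : 0 < ‖x‖ ^ 2 := by positivity
  have hsub := integral_comp_mul_left_Ioi
    (fun τ => τ ^ (-p) * exp (-‖x - τ • y‖ ^ 2 / (4 * τ))) 0 ha2
  rw [mul_zero, smul_eq_mul] at hsub
  rw [← mul_inv_cancel_left₀ ha2.ne' (∫ τ in Ioi (0:ℝ), _), ← hsub, kernelProfile,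
    ← integral_const_mul, ← integral_const_mul]
  refine setIntegral_congr_fun measurableSet_Ioi fun σ (hσ : 0 < σ) => ?_
  have hexp : -‖x - (‖x‖ ^ 2 * σ) • y‖ ^ 2 / (4 * (‖x‖ ^ 2 * σ)) =
      -(‖x‖ * ‖y‖ - ⟪x, y⟫) / 2 + -(1 - ‖x‖ * ‖y‖ * σ) ^ 2 / (4 * σ) := by
    rw [norm_sub_sq_real, inner_smul_right, norm_smul, norm_of_nonneg (by positivity)]
    field_simp
    ring
  have hpow : ‖x‖ ^ 2 * (‖x‖ ^ 2 * σ) ^ (-p) = σ ^ (-p) / ‖x‖ ^ (2 * p - 2) := by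
    have : (‖x‖ ^ 2) ^ (-p) = (‖x‖ ^ (2 * p))⁻¹ := by
      rw [rpow_neg ha2.le, ← rpow_natCast, ← rpow_mul ha.le]
      norm_num
    rw [mul_rpow ha2.le hσ.le, this, rpow_sub ha, rpow_two]
    field_simp
  rw [hexp, exp_add, ← mul_assoc, hpow]
  ring

theorem le_rpow_neg_mul_exp_of_mem_Icc {p r q σ : ℝ} (hp : 0 ≤ p) (hr : 0 ≤ r) (hq : 0 < q)
    (hrq : (1 + r) * q ^ 2 = 1) (hσ : σ ∈ Icc (q ^ 2) (q ^ 2 + q ^ 3)) :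
    exp (-(1 / 4)) * (2 * q ^ 2) ^ (-p) ≤ σ ^ (-p) * exp (-(1 - r * σ) ^ 2 / (4 * σ)) := by
  obtain ⟨hlo, hhi⟩ := hσ
  have hσ0 : 0 < σ := lt_of_lt_of_le (by positivity) hlo
  have hq1 : q ≤ 1 := by nlinarith
  have hσ2 : σ ≤ 2 * q ^ 2 := by nlinarith
  -- `1 - rσ = q² - r(σ - q²)` with `0 ≤ r(σ - q²) ≤ rq³ = q - q³`, so `(1 - rσ)² ≤ q² ≤ σ`
  have hsq : (1 - r * σ) ^ 2 ≤ σ := by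
    have h1 : r * (σ - q ^ 2) ≤ q - q ^ 3 := by nlinarith [mul_le_mul_of_nonneg_left hhi hr]
    nlinarith [mul_nonneg hr (sub_nonneg.2 hlo)]
  rw [mul_comm]
  refine mul_le_mul (rpow_le_rpow_of_nonpos hσ0 hσ2 (by linarith)) (exp_le_exp.2 ?_)
    (exp_pos _).le (by positivity)
  rw [neg_div, neg_le_neg_iff, div_le_iff₀ (by positivity)]
  linarith

theorem mul_rpow_le_kernelProfile {p : ℝ} (hp : 1 < p) {r : ℝ} (hr : 0 ≤ r) :
    exp (-(1 / 4)) * 2 ^ (-p) * (1 + r) ^ (p - 3 / 2) ≤ kernelProfile p r := by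
  have h1r : 0 < 1 + r := by linarith
  set q := (1 + r) ^ (-(1 / 2) : ℝ)
  have hq : 0 < q := rpow_pos_of_pos h1r _
  have hqpow (n : ℕ) : q ^ n = (1 + r) ^ (-(n / 2) : ℝ) := by
    rw [← rpow_natCast, ← rpow_mul h1r.le]
    ring_nf
  have hq2 : q ^ 2 = (1 + r)⁻¹ := by rw [hqpow, ← rpow_neg_one]; norm_num
  have hq3 : q ^ 3 = (1 + r) ^ (-(3 / 2) : ℝ) := by rw [hqpow]; norm_num
  have hrq : (1 + r) * q ^ 2 = 1 := by rw [hq2, mul_inv_cancel₀ h1r.ne']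
  have hIcc : Icc (q ^ 2) (q ^ 2 + q ^ 3) ⊆ Ioi 0 := fun _ hσ => (pow_pos hq 2).trans_le hσ.1
  have hint := integrableOn_kernelProfile_integrand hp r
  calc exp (-(1 / 4)) * 2 ^ (-p) * (1 + r) ^ (p - 3 / 2)
      = ∫ _ in Icc (q ^ 2) (q ^ 2 + q ^ 3), exp (-(1 / 4)) * (2 * q ^ 2) ^ (-p) := by
        rw [setIntegral_const, Real.volume_real_Icc_of_le (le_add_of_nonneg_right (pow_pos hq 3).le),
          smul_eq_mul, add_sub_cancel_left, mul_rpow zero_le_two (by positivity), hq2, hq3, inv_rpow h1r.le,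
          rpow_neg h1r.le p, inv_inv, sub_eq_add_neg, rpow_add h1r]
        ring
    _ ≤ ∫ σ in Icc (q ^ 2) (q ^ 2 + q ^ 3), σ ^ (-p) * exp (-(1 - r * σ) ^ 2 / (4 * σ)) :=
        setIntegral_mono_on (integrableOn_const measure_Icc_lt_top.ne) (hint.mono_set hIcc)
          measurableSet_Icc fun σ hσ => le_rpow_neg_mul_exp_of_mem_Icc (by linarith) hr hq hrq hσ
    _ ≤ kernelProfile p r := by
        refine setIntegral_mono_set hint ?_ (Filter.Eventually.of_forall hIcc)
        filter_upwards [ae_restrict_mem measurableSet_Ioi] with σ (hσ : 0 < σ)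
        positivity

theorem rpow_neg_mul_exp_le_add_gaussian {p r σ : ℝ} (hp : 0 ≤ p) (hr : 0 ≤ r) (hσ : 0 < σ) :
    σ ^ (-p) * exp (-(1 - r * σ) ^ 2 / (4 * σ)) ≤
      σ ^ (-p) * exp (-(1 / 16 / σ)) + (2 * r) ^ p * exp (-(r ^ 3 / 8) * (σ - r⁻¹) ^ 2) := by
  rcases le_or_gt (1 / 2) |1 - r * σ| with hfar | hnear
  · have hsq : 1 / 4 ≤ (1 - r * σ) ^ 2 := by nlinarith [sq_abs (1 - r * σ)]
    have hexp : -(1 - r * σ) ^ 2 / (4 * σ) ≤ -(1 / 16 / σ) := by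
      rw [neg_div, neg_le_neg_iff, div_div, div_le_div_iff₀ (by positivity) (by positivity)]
      nlinarith
    have : 0 ≤ (2 * r) ^ p * exp (-(r ^ 3 / 8) * (σ - r⁻¹) ^ 2) := by positivity
    have := mul_le_mul_of_nonneg_left (exp_le_exp.2 hexp) (rpow_nonneg hσ.le (-p))
    linarith
  · obtain ⟨hlo, hhi⟩ := abs_lt.1 hnear
    have hr0 : 0 < r := by nlinarith
    have hpow : σ ^ (-p) ≤ (2 * r) ^ p := by
      rw [rpow_neg hσ.le, ← inv_rpow hσ.le]
      exact rpow_le_rpow (by positivity) ((inv_le_iff_one_le_mul₀ hσ).2 (by linarith)) hp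
    -- `(1 - rσ)² = r²(σ - 1/r)²`, and `4σ ≤ 8/r` because `rσ < 3/2`
    have hexp : -(1 - r * σ) ^ 2 / (4 * σ) ≤ -(r ^ 3 / 8) * (σ - r⁻¹) ^ 2 := by
      have hsq : (1 - r * σ) ^ 2 = r ^ 2 * (σ - r⁻¹) ^ 2 := by field_simp; ring
      rw [hsq, neg_div, neg_mul, neg_le_neg_iff, le_div_iff₀ (by positivity)]
      nlinarith [mul_nonneg (mul_nonneg (sq_nonneg r) (sq_nonneg (σ - r⁻¹))) hr0.le]
    have : 0 ≤ σ ^ (-p) * exp (-(1 / 16 / σ)) := by positivity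
    have := mul_le_mul hpow (exp_le_exp.2 hexp) (exp_pos _).le (by positivity)
    linarith

theorem integral_rpow_mul_exp_neg_mul_sq_sub {p r : ℝ} (hr : 0 < r) :
    ∫ σ, (2 * r) ^ p * exp (-(r ^ 3 / 8) * (σ - r⁻¹) ^ 2) = 2 ^ p * √(8 * π) * r ^ (p - 3 / 2) := by
  have hsqrt : √(r ^ 3) = r ^ (3 / 2 : ℝ) := by
    rw [sqrt_eq_rpow, ← rpow_natCast, ← rpow_mul hr.le]
    norm_num
  rw [integral_const_mul, integral_sub_right_eq_self (fun σ => exp (-(r ^ 3 / 8) * σ ^ 2)),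
    integral_gaussian, show π / (r ^ 3 / 8) = 8 * π / r ^ 3 by field_simp,
    sqrt_div' _ (by positivity), hsqrt, mul_rpow zero_le_two hr.le, rpow_sub hr]
  ring

theorem kernelProfile_le_add_rpow {p : ℝ} (hp : 1 < p) {r : ℝ} (hr : 0 < r) :
    kernelProfile p r ≤
      (∫ σ in Ioi (0:ℝ), σ ^ (-p) * exp (-(1 / 16 / σ))) + 2 ^ p * √(8 * π) * r ^ (p - 3 / 2) := by
  have hfar := integrableOn_rpow_neg_mul_exp_neg_div (c := 1 / 16) hp (by norm_num)
  have hnear : Integrable fun σ : ℝ => (2 * r) ^ p * exp (-(r ^ 3 / 8) * (σ - r⁻¹) ^ 2) :=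
    ((integrable_exp_neg_mul_sq (by positivity)).comp_sub_right r⁻¹).const_mul _
  calc kernelProfile p r
      ≤ ∫ σ in Ioi (0:ℝ), (σ ^ (-p) * exp (-(1 / 16 / σ)) +
          (2 * r) ^ p * exp (-(r ^ 3 / 8) * (σ - r⁻¹) ^ 2)) :=
        setIntegral_mono_on (integrableOn_kernelProfile_integrand hp r)
          (hfar.add hnear.integrableOn) measurableSet_Ioi
          fun _ hσ => rpow_neg_mul_exp_le_add_gaussian (by linarith) hr.le hσ
    _ = (∫ σ in Ioi (0:ℝ), σ ^ (-p) * exp (-(1 / 16 / σ))) +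
          ∫ σ in Ioi (0:ℝ), (2 * r) ^ p * exp (-(r ^ 3 / 8) * (σ - r⁻¹) ^ 2) :=
        integral_add hfar hnear.integrableOn
    _ ≤ (∫ σ in Ioi (0:ℝ), σ ^ (-p) * exp (-(1 / 16 / σ))) +
          ∫ σ, (2 * r) ^ p * exp (-(r ^ 3 / 8) * (σ - r⁻¹) ^ 2) :=
        add_le_add_right
          (setIntegral_le_integral hnear (Filter.Eventually.of_forall fun _ => by positivity)) _
    _ = _ := by rw [integral_rpow_mul_exp_neg_mul_sq_sub hr]

theorem exists_kernelProfile_le_mul_rpow {p : ℝ} (hp : 3 / 2 ≤ p) :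
    ∃ C > 0, ∀ r, 0 ≤ r → kernelProfile p r ≤ C * (1 + r) ^ (p - 3 / 2) := by
  set K := ∫ σ in Ioi (0:ℝ), σ ^ (-p) * exp (-(1 / 16 / σ))
  have hK : 0 ≤ K := setIntegral_nonneg measurableSet_Ioi fun σ (hσ : 0 < σ) => by positivity
  have hA : 0 < K + 2 ^ p * √(8 * π) := by positivity
  -- the Gaussian bound needs `r > 0`, so the value at `r = 0` is absorbed into the constant
  refine ⟨max (K + 2 ^ p * √(8 * π)) (kernelProfile p 0), lt_max_of_lt_left hA, fun r hr => ?_⟩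
  rcases hr.eq_or_lt with rfl | hr
  · rw [add_zero, one_rpow, mul_one]
    exact le_max_right _ _
  calc kernelProfile p r ≤ K + 2 ^ p * √(8 * π) * r ^ (p - 3 / 2) := kernelProfile_le_add_rpow (by linarith) hr
    _ ≤ (K + 2 ^ p * √(8 * π)) * (1 + r) ^ (p - 3 / 2) := by
        rw [add_mul]
        gcongr
        · exact le_mul_of_one_le_right hK (one_le_rpow (by linarith) (by linarith))
        · linarith
    _ ≤ _ := by gcongr; exact le_max_left _ _

theorem stmt8 (d : ℕ) (hd : 3 ≤ d) :
    ∃ c₁ c₂ : ℝ, 0 < c₁ ∧ 0 < c₂ ∧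
      ∀ x y : EuclideanSpace ℝ (Fin d), x ≠ 0 →
        c₁ * (Real.exp (-(‖x‖*‖y‖ - ⟪x, y⟫)/2) * (1 + ‖x‖*‖y‖) ^ (((d:ℝ)-3)/2) / ‖x‖ ^ ((d:ℝ)-2)) ≤
          (∫ τ in Set.Ioi (0:ℝ), τ ^ (-(d:ℝ)/2) * Real.exp (-‖x - τ • y‖^2 / (4*τ))) ∧
        (∫ τ in Set.Ioi (0:ℝ), τ ^ (-(d:ℝ)/2) * Real.exp (-‖x - τ • y‖^2 / (4*τ))) ≤
          c₂ * (Real.exp (-(‖x‖*‖y‖ - ⟪x, y⟫)/2) * (1 + ‖x‖*‖y‖) ^ (((d:ℝ)-3)/2) / ‖x‖ ^ ((d:ℝ)-2)) := by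
  have hp : (3 : ℝ) / 2 ≤ d / 2 := by gcongr; exact_mod_cast hd
  set p : ℝ := d / 2
  obtain ⟨C, hC, hupper⟩ := exists_kernelProfile_le_mul_rpow hp
  refine ⟨exp (-(1 / 4)) * 2 ^ (-p), C, by positivity, hC, fun x y hx => ?_⟩
  have hr : 0 ≤ ‖x‖ * ‖y‖ := by positivity
  rw [show -(d : ℝ) / 2 = -p by ring, setIntegral_rpow_neg_mul_exp_neg_norm_sub_smul p hx y,
    show ((d : ℝ) - 3) / 2 = p - 3 / 2 by ring, show (d : ℝ) - 2 = 2 * p - 2 by ring]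
  set E := exp (-(‖x‖ * ‖y‖ - ⟪x, y⟫) / 2) / ‖x‖ ^ (2 * p - 2)
  have hE : 0 ≤ E := by positivity
  constructor
  · calc _ = E * (exp (-(1 / 4)) * 2 ^ (-p) * (1 + ‖x‖ * ‖y‖) ^ (p - 3 / 2)) := by ring
      _ ≤ _ := mul_le_mul_of_nonneg_left (mul_rpow_le_kernelProfile (by linarith) hr) hE
  · calc _ ≤ E * (C * (1 + ‖x‖ * ‖y‖) ^ (p - 3 / 2)) :=
          mul_le_mul_of_nonneg_left (hupper _ hr) hE
      _ = _ := by ring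
end

section
/- Let d ≥ 4, A = { (z₁,z₂) ∈ ℝ × ℝ^{d-1} : z₁ > 4, |z₂| ≤ √z₁ }, and V(z) = -(1/z₁) 1_A(z). Then with x = 0 and y = (1,0,…,0), ∫_{ℝ^d} |V(z)| e^{-(|z||y| - z·y)/2} (1 + |z||y|)^{(d-3)/2} / |z|^{d-2} dz = +∞. -/
/-!
On `A` one has `z₁ ≤ |z| ≤ z₁ + 1 ≤ 2 z₁`, so the integrand is at least a constant times
`z₁ ^ (-(d + 1) / 2)`. Splitting off the coordinate `z₁`, the slice of `A` at height `t > 4` is the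
Euclidean ball of radius `√t` in `ℝ^(d-1)`, whose volume is a constant times `t ^ ((d - 1) / 2)`.
Hence the integral dominates a multiple of `∫_{t > 4} t⁻¹ dt = ∞`.
-/

open MeasureTheory Real RealInnerProductSpace Set Metric WithLp
open scoped ENNReal

theorem lintegral_Ioi_ofReal_inv_eq_top {a : ℝ} (ha : 0 ≤ a) :
    ∫⁻ t in Ioi a, ENNReal.ofReal t⁻¹ = ⊤ := by
  by_contra h
  have hnonneg : 0 ≤ᵐ[volume.restrict (Ioi a)] fun t : ℝ => t⁻¹ := by
    filter_upwards [ae_restrict_mem measurableSet_Ioi] with t ht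
    exact inv_nonneg.2 (ha.trans ht.le)
  exact not_integrableOn_Ioi_inv ⟨measurable_inv.aestronglyMeasurable,
    (hasFiniteIntegral_iff_ofReal hnonneg).2 (lt_top_iff_ne_top.2 h)⟩

namespace EuclideanSpace

variable {n : ℕ}

theorem measurePreserving_toLp_insertNth (i : Fin (n + 1)) :
    MeasurePreserving (fun p : ℝ × EuclideanSpace ℝ (Fin n) =>
      (toLp 2 (i.insertNth p.1 (ofLp p.2)) : EuclideanSpace ℝ (Fin (n + 1)))) :=
  (PiLp.volume_preserving_toLp (Fin (n + 1))).comp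
    (((volume_preserving_piFinSuccAbove (fun _ : Fin (n + 1) => ℝ) i).symm).comp
      ((MeasurePreserving.id volume).prod (PiLp.volume_preserving_ofLp (Fin n))))

theorem lintegral_eq_lintegral_insertNth (i : Fin (n + 1))
    {f : EuclideanSpace ℝ (Fin (n + 1)) → ℝ≥0∞} (hf : Measurable f) :
    ∫⁻ z, f z = ∫⁻ t, ∫⁻ w : EuclideanSpace ℝ (Fin n), f (toLp 2 (i.insertNth t (ofLp w))) := by
  rw [← (measurePreserving_toLp_insertNth i).lintegral_comp hf, Measure.volume_eq_prod]
  exact lintegral_prod _ (hf.comp (measurePreserving_toLp_insertNth i).measurable).aemeasurable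

theorem norm_sq_toLp_insertNth (i : Fin (n + 1)) (t : ℝ) (w : EuclideanSpace ℝ (Fin n)) :
    ‖(toLp 2 (i.insertNth t (ofLp w)) : EuclideanSpace ℝ (Fin (n + 1)))‖ ^ 2 = t ^ 2 + ‖w‖ ^ 2 := by
  simp [real_norm_sq_eq, Fin.sum_univ_succAbove _ i]

end EuclideanSpace

-- The set `A` with `z₁ = w i`, since `|z₂|² = ‖w‖² - (w i)²`.
def paraboloidRegion {d : ℕ} (i : Fin d) : Set (EuclideanSpace ℝ (Fin d)) :=
  {w | 4 < w i ∧ ‖w‖ ^ 2 - (w i) ^ 2 ≤ w i}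

theorem measurableSet_paraboloidRegion {d : ℕ} (i : Fin d) :
    MeasurableSet (paraboloidRegion i) := by
  have hi : Continuous fun w : EuclideanSpace ℝ (Fin d) => w i := by fun_prop
  exact (measurableSet_lt measurable_const hi.measurable).inter
    (measurableSet_le (by fun_prop) hi.measurable)

theorem toLp_insertNth_mem_paraboloidRegion {n : ℕ} (i : Fin (n + 1)) (t : ℝ)
    (w : EuclideanSpace ℝ (Fin n)) :
    (toLp 2 (i.insertNth t (ofLp w)) : EuclideanSpace ℝ (Fin (n + 1))) ∈ paraboloidRegion i ↔
      4 < t ∧ w ∈ closedBall 0 √t := by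
  simp only [paraboloidRegion, mem_ofPred_eq, EuclideanSpace.norm_sq_toLp_insertNth,
    Fin.insertNth_apply_same, add_sub_cancel_left, mem_closedBall_zero_iff]
  exact and_congr_right fun ht => (Real.le_sqrt (norm_nonneg w) (by linarith)).symm

theorem lintegral_indicator_paraboloidRegion {n : ℕ} (i : Fin (n + 1)) {g : ℝ → ℝ≥0∞}
    (hg : Measurable g) :
    ∫⁻ z, (paraboloidRegion i).indicator (fun z => g (z i)) z =
      ∫⁻ t in Ioi 4, g t * volume (closedBall (0 : EuclideanSpace ℝ (Fin n)) √t) := by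
  have hf : Measurable ((paraboloidRegion i).indicator
      fun z : EuclideanSpace ℝ (Fin (n + 1)) => g (z i)) :=
    (hg.comp (by fun_prop)).indicator (measurableSet_paraboloidRegion i)
  rw [EuclideanSpace.lintegral_eq_lintegral_insertNth i hf,
    ← lintegral_indicator measurableSet_Ioi]
  congr 1 with t
  by_cases ht : 4 < t
  · rw [indicator_of_mem (mem_Ioi.2 ht), ← lintegral_indicator_const measurableSet_closedBall]
    congr 1 with w
    simp [indicator, toLp_insertNth_mem_paraboloidRegion, ht]
  · simp [indicator, toLp_insertNth_mem_paraboloidRegion, ht]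

theorem exp_mul_rpow_le_of_le_le_add_one {a r p q : ℝ} (ha : 1 ≤ a) (har : a ≤ r)
    (hra : r ≤ a + 1) (hp : 0 ≤ p) (hq : 0 ≤ q) :
    exp (-(1 / 2)) * 2 ^ (-q) * a ^ (p - q) ≤ exp (-(r - a) / 2) * (1 + r) ^ p / r ^ q := by
  have ha0 : 0 < a := by linarith
  have hr0 : 0 < r := by linarith
  have hexp : exp (-(1 / 2)) ≤ exp (-(r - a) / 2) := exp_le_exp.2 (by linarith)
  have hpow : a ^ p ≤ (1 + r) ^ p := rpow_le_rpow ha0.le (by linarith) hp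
  have hneg : (2 * a) ^ (-q) ≤ r ^ (-q) := rpow_le_rpow_of_nonpos hr0 (by linarith) (by linarith)
  calc exp (-(1 / 2)) * 2 ^ (-q) * a ^ (p - q)
      = exp (-(1 / 2)) * a ^ p * (2 * a) ^ (-q) := by
        rw [rpow_sub ha0, mul_rpow zero_le_two ha0.le, rpow_neg ha0.le, rpow_neg zero_le_two]
        ring
    _ ≤ exp (-(r - a) / 2) * (1 + r) ^ p * r ^ (-q) := by gcongr
    _ = exp (-(r - a) / 2) * (1 + r) ^ p / r ^ q := by rw [rpow_neg hr0.le]; ring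

theorem norm_le_apply_add_one_of_mem_paraboloidRegion {d : ℕ} {i : Fin d}
    {z : EuclideanSpace ℝ (Fin d)} (hz : z ∈ paraboloidRegion i) : ‖z‖ ≤ z i + 1 := by
  have hzi : 0 ≤ z i + 1 := by linarith [hz.1]
  exact (pow_le_pow_iff_left₀ (norm_nonneg z) hzi two_ne_zero).1 (by linarith [hz.2])

theorem indicator_le_of_paraboloidRegion {d : ℕ} (i : Fin d) {p q : ℝ} (hp : 0 ≤ p)
    (hq : 0 ≤ q) (z : EuclideanSpace ℝ (Fin d)) :
    (paraboloidRegion i).indicator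
        (fun z => ENNReal.ofReal (exp (-(1 / 2)) * 2 ^ (-q) * z i ^ (p - q - 1))) z ≤
      ENNReal.ofReal (|(paraboloidRegion i).indicator (fun w => -(w i)⁻¹) z| *
        (exp (-(‖z‖ - z i) / 2) * (1 + ‖z‖) ^ p / ‖z‖ ^ q)) := by
  by_cases hz : z ∈ paraboloidRegion i
  · have hzi : 0 < z i := by linarith [hz.1]
    rw [indicator_of_mem hz, indicator_of_mem hz, abs_neg, abs_inv, abs_of_pos hzi,
      rpow_sub hzi, Real.rpow_one, div_eq_mul_inv _ (z i), ← mul_assoc, mul_comm _ (z i)⁻¹]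
    gcongr
    exact exp_mul_rpow_le_of_le_le_add_one (by linarith [hz.1]) ((le_abs_self _).trans
      (PiLp.norm_apply_le z i)) (norm_le_apply_add_one_of_mem_paraboloidRegion hz) hp hq
  · simp [indicator_of_notMem hz]

theorem rpow_mul_sqrt_pow {t e : ℝ} {n : ℕ} (ht : 0 < t) (he : e + n / 2 = -1) :
    t ^ e * √t ^ n = t⁻¹ := by
  rw [sqrt_eq_rpow, ← rpow_natCast, ← rpow_mul ht.le, ← rpow_add ht, ← rpow_neg_one]
  congr 1
  linarith

theorem lintegral_indicator_paraboloidRegion_rpow_eq_top {n : ℕ} (i : Fin (n + 1)) {C e : ℝ}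
    (hC : 0 < C) (he : e + n / 2 = -1) :
    ∫⁻ z, (paraboloidRegion i).indicator (fun z => ENNReal.ofReal (C * z i ^ e)) z = ⊤ := by
  set V := volume (closedBall (0 : EuclideanSpace ℝ (Fin n)) 1)
  have hV : V ≠ 0 := (measure_closedBall_pos _ _ one_pos).ne'
  have hslice : ∀ t ∈ Ioi (4 : ℝ),
      ENNReal.ofReal (C * t ^ e) * volume (closedBall (0 : EuclideanSpace ℝ (Fin n)) √t) =
        ENNReal.ofReal C * V * ENNReal.ofReal t⁻¹ := by
    intro t ht
    have ht0 : 0 < t := by linarith [mem_Ioi.1 ht]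
    rw [Measure.addHaar_closedBall' _ _ (sqrt_nonneg t), finrank_euclideanSpace_fin, ← mul_assoc,
      ← ENNReal.ofReal_mul (by positivity), mul_assoc, rpow_mul_sqrt_pow ht0 he,
      ENNReal.ofReal_mul hC.le]
    ring
  rw [lintegral_indicator_paraboloidRegion i (g := fun t => ENNReal.ofReal (C * t ^ e))
      (by fun_prop), setLIntegral_congr_fun measurableSet_Ioi hslice,
    lintegral_const_mul _ measurable_inv.ennreal_ofReal,
    lintegral_Ioi_ofReal_inv_eq_top (by norm_num)]
  exact ENNReal.mul_top (mul_ne_zero (by simpa using hC) hV)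

theorem stmt14 (d : ℕ) (hd : 4 ≤ d) :
    (∫⁻ z : EuclideanSpace ℝ (Fin d),
        ENNReal.ofReal
          (|Set.indicator {w : EuclideanSpace ℝ (Fin d) | 4 < w ⟨0, by omega⟩ ∧ ‖w‖^2 - (w ⟨0, by omega⟩)^2 ≤ w ⟨0, by omega⟩}
              (fun w => -(w ⟨0, by omega⟩)⁻¹) z| *
            (Real.exp (-(‖z‖ * ‖(EuclideanSpace.single (⟨0, by omega⟩ : Fin d) 1 : EuclideanSpace ℝ (Fin d))‖ -
                  ⟪z, (EuclideanSpace.single (⟨0, by omega⟩ : Fin d) 1 : EuclideanSpace ℝ (Fin d))⟫)/2) *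
              (1 + ‖z‖ * ‖(EuclideanSpace.single (⟨0, by omega⟩ : Fin d) 1 : EuclideanSpace ℝ (Fin d))‖) ^ (((d:ℝ)-3)/2) /
                ‖z‖ ^ ((d:ℝ)-2)))) = ⊤ := by
  obtain ⟨n, rfl⟩ : ∃ n, d = n + 1 := ⟨d - 1, by omega⟩
  have hd' : (4 : ℝ) ≤ n + 1 := by exact_mod_cast hd
  set i : Fin (n + 1) := ⟨0, by omega⟩
  set p : ℝ := (((n + 1 : ℕ) : ℝ) - 3) / 2
  set q : ℝ := ((n + 1 : ℕ) : ℝ) - 2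
  have hp : 0 ≤ p := by push_cast [p]; linarith
  have hq : 0 ≤ q := by push_cast [q]; linarith
  simp only [PiLp.norm_single, norm_one, EuclideanSpace.inner_single_right, conj_trivial,
    one_mul, mul_one]
  refine eq_top_iff.2 ?_
  calc ⊤ = ∫⁻ z, (paraboloidRegion i).indicator
        (fun z => ENNReal.ofReal (exp (-(1 / 2)) * 2 ^ (-q) * z i ^ (p - q - 1))) z :=
        (lintegral_indicator_paraboloidRegion_rpow_eq_top i (by positivity)
          (by push_cast [p, q]; ring)).symm
    _ ≤ _ := lintegral_mono (indicator_le_of_paraboloidRegion i hp hq)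
end
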